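/- arXiv:1707.06748 — 9 statements merged into one kernel-verified Lean document; each statement's English description precedes it below -/
import Mathlib

section
/- Let n, k ≥ 1 and let A : Fin k → Matrix (Fin n) (Fin n) ℂ be a tuple of n×n complex matrices. If the Burnside graph of A is not strongly connected (i.e., there exist i j : Fin n with ¬ Relation.ReflTransGen E i j), then the algebra generated by the A m is not the full matrix algebra: Algebra.adjoin ℂ (Set.range A) ≠ ⊤. -/
/-!
Fix `i`, `j` with `j` not reachable from `i` in the Burnside graph, and sort the vertices into two
blocks by reachability from `i` (as the `Prop`-valued block map `ReflTransGen E i`, with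
`False < True`). No edge leaves the reachable block, so every `A m` is block triangular, hence so
is every matrix in the algebra they generate; the matrix unit `single i j 1` is not.
-/

namespace Matrix

variable {m R : Type*}

theorem blockTriangular_reflTransGen [Zero R] {M : Matrix m m R} {r : m → m → Prop}
    (hr : ∀ p q, p ≠ q → M p q ≠ 0 → r p q) (i : m) :
    M.BlockTriangular (Relation.ReflTransGen r i) := by
  intro p q hqp
  obtain ⟨hp, hq⟩ : Relation.ReflTransGen r i p ∧ ¬Relation.ReflTransGen r i q := by
    simpa using hqp.not_ge
  by_contra hpq
  exact hq (hp.tail (hr p q (by rintro rfl; exact hq hp) hpq))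

theorem blockTriangularSubalgebra_ne_top [CommSemiring R] {A : Type*} [Semiring A] [Algebra R A]
    [Nontrivial A] [DecidableEq m] [Fintype m] {α : Type*} [LinearOrder α] {b : m → α} {i j : m}
    (hji : b j < b i) : blockTriangularSubalgebra R A b ≠ ⊤ := by
  intro htop
  have : (single i j (1 : A)).BlockTriangular b := by
    rw [← mem_blockTriangularSubalgebra (R := R), htop]; trivial
  simpa using this hji

end Matrix

theorem burnside_graph_not_strongly_connected_adjoin_ne_top_general
    (n k : ℕ)
    (A : Fin k → Matrix (Fin n) (Fin n) ℂ)
    (hnc : ∃ i j : Fin n,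
      ¬ Relation.ReflTransGen (fun i j : Fin n => i ≠ j ∧ ∃ m, A m i j ≠ 0) i j) :
    Algebra.adjoin ℂ (Set.range A) ≠ ⊤ := by
  obtain ⟨i, j, hij⟩ := hnc
  set reach := Relation.ReflTransGen (fun i j : Fin n => i ≠ j ∧ ∃ m, A m i j ≠ 0) i
  have hA : Set.range A ⊆ Matrix.blockTriangularSubalgebra ℂ ℂ reach := by
    rintro _ ⟨m, rfl⟩
    exact Matrix.blockTriangular_reflTransGen (fun p q hpq h => ⟨hpq, m, h⟩) i
  have hji : reach j < reach i := lt_of_le_not_ge (fun _ => .refl) (fun h => hij (h .refl))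
  exact ne_top_of_le_ne_top (Matrix.blockTriangularSubalgebra_ne_top hji)
    (Algebra.adjoin_le hA)

/-- **Obstacle to full algebra.** If the Burnside graph of a tuple of `n × n`
complex matrices is not strongly connected, then the matrices do not generate
the full matrix algebra. -/
theorem burnside_graph_not_strongly_connected_adjoin_ne_top
    (n k : ℕ) (hn : 1 ≤ n) (hk : 1 ≤ k)
    (A : Fin k → Matrix (Fin n) (Fin n) ℂ)
    (hnc : ∃ i j : Fin n,
      ¬ Relation.ReflTransGen (fun i j : Fin n => i ≠ j ∧ ∃ m, A m i j ≠ 0) i j) :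
    Algebra.adjoin ℂ (Set.range A) ≠ ⊤ :=
  burnside_graph_not_strongly_connected_adjoin_ne_top_general n k A hnc
end

section
/- Every unital ℂ-subalgebra 𝒜 of Matrix (Fin n) (Fin n) ℂ (n ≥ 1) can be put into block upper triangular form whose diagonal blocks are full matrix algebras: there exist m ≥ 1, block sizes d : Fin m → ℕ with d i ≥ 1 for all i and ∑ i, d i = n, an index bijection e : (Σ i : Fin m, Fin (d i)) ≃ Fin n, and a unitary matrix U ∈ Matrix.unitaryGroup (Fin n) ℂ, such that, writing for M ∈ 𝒜 the conjugate M' := (star U) * M * U and its (i,j) block M'_{ij} : Matrix (Fin (d i)) (Fin (d j)) ℂ given by (M'_{ij}) a b := M' (e ⟨i,a⟩) (e ⟨j,b⟩), the following hold: (a) for every M ∈ 𝒜 and all block indices i, j : Fin m with j < i, the block M'_{ij} = 0; and (b) for every i : Fin m, the map M ↦ M'_{ii} from 𝒜 to Matrix (Fin (d i)) (Fin (d i)) ℂ is surjective. -/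
/-!
By induction on the dimension. If `ι → ℂ` is a simple `𝒜`-module, Schur's lemma and the
Jacobson density theorem give Burnside's theorem `𝒜 = ⊤`, a single full block. Otherwise an
orthonormal basis adapted to a proper invariant subspace `W` and to `Wᗮ` conjugates `𝒜` into
`2 × 2` block upper triangular form. Taking a diagonal block is multiplicative on block upper
triangular matrices, so the two diagonal blocks of `𝒜` are again unital subalgebras, of smaller
size. Decompositions of these, given by induction, are glued by a block-diagonal unitary, the
blocks being ordered lexicographically.
-/

open Matrix Module

section SigmaLexRefine

variable {ι γ : Type*} {β : γ → Type*} (c : ι → γ) (b : ∀ k, {p // c p = k} → β k)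

def sigmaLexRefine (p : ι) : Σₗ k, β k := toLex ⟨c p, b (c p) ⟨p, rfl⟩⟩

variable {c b}

theorem sigmaLexRefine_apply {k : γ} (x : {p // c p = k}) :
    sigmaLexRefine c b x = toLex ⟨k, b k x⟩ := by
  obtain ⟨p, rfl⟩ := x
  rfl

theorem sigmaLexRefine_surjective (hb : ∀ k, Function.Surjective (b k)) :
    Function.Surjective (sigmaLexRefine c b) := by
  rintro ⟨k, j⟩
  obtain ⟨x, rfl⟩ := hb k j
  exact ⟨x, sigmaLexRefine_apply x⟩

theorem sigmaLexRefine_lt_iff [Preorder γ] [∀ k, LT (β k)] {p q : ι} :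
    sigmaLexRefine c b q < sigmaLexRefine c b p ↔
      c q < c p ∨ ∃ h : c q = c p, b (c p) ⟨q, h⟩ < b (c p) ⟨p, rfl⟩ := by
  constructor
  · intro hlt
    refine (Sigma.Lex.lt_def.1 hlt).imp_right fun ⟨h, _⟩ => ⟨h, ?_⟩
    rw [sigmaLexRefine_apply ⟨q, h⟩] at hlt
    obtain ⟨_, hlt⟩ := (Sigma.Lex.lt_def.1 hlt).resolve_left (lt_irrefl _)
    exact hlt
  · rintro (h | ⟨h, hlt⟩)
    · exact Sigma.Lex.lt_def.2 (Or.inl h)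
    · rw [sigmaLexRefine_apply ⟨q, h⟩]
      exact Sigma.Lex.lt_def.2 (Or.inr ⟨rfl, hlt⟩)

def sigmaLexRefineFiberEquiv (kj : Σₗ k, β k) :
    {x : {p // c p = (ofLex kj).1} // b _ x = (ofLex kj).2} ≃ {p // sigmaLexRefine c b p = kj} :=
  (Equiv.subtypeSubtypeEquivSubtypeExists _ _).trans <| Equiv.subtypeEquivRight fun p => by
    refine ⟨fun ⟨hk, hj⟩ => (sigmaLexRefine_apply ⟨p, hk⟩).trans (by rw [hj]; rfl), fun hp => ?_⟩
    have hk : c p = (ofLex kj).1 := congrArg (fun s => (ofLex s).1) hp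
    rw [sigmaLexRefine_apply ⟨p, hk⟩] at hp
    exact ⟨hk, eq_of_heq (congr_arg_heq (fun s => (ofLex s).2) hp)⟩

end SigmaLexRefine

theorem Submodule.exists_orthonormalBasis_mem_cond {𝕜 E ι : Type*} [RCLike 𝕜]
    [NormedAddCommGroup E] [InnerProductSpace 𝕜 E] [FiniteDimensional 𝕜 E] [Fintype ι]
    (K : Submodule 𝕜 E) (hι : finrank 𝕜 E = Fintype.card ι) (hbot : K ≠ ⊥) (htop : K ≠ ⊤) :
    ∃ (b : OrthonormalBasis ι 𝕜 E) (c : ι → Bool),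
      Function.Surjective c ∧ ∀ p, b p ∈ cond (c p) Kᗮ K := by
  have hInternal : DirectSum.IsInternal fun i : Bool => cond i K Kᗮ :=
    (DirectSum.isInternal_submodule_iff_isCompl _ (i := true) (j := false) (by decide)
      (by ext x; cases x <;> simp)).2 K.isCompl_orthogonal
  let b₀ := hInternal.collectedOrthonormalBasis K.orthogonalFamily_self
    fun i => stdOrthonormalBasis 𝕜 ↥(cond i K Kᗮ : Submodule 𝕜 _)
  let σ : ι ≃ Σ i : Bool, Fin (finrank 𝕜 ↥(cond i K Kᗮ : Submodule 𝕜 _)) :=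
    Fintype.equivOfCardEq <| by rw [← finrank_eq_card_basis b₀.toBasis, hι]
  have block_nonempty (i : Bool) (hi : cond i K Kᗮ ≠ ⊥) : ∃ p, (σ p).1 = i :=
    ⟨σ.symm ⟨i, ⟨0, Nat.pos_of_ne_zero (Submodule.finrank_eq_zero.not.2 hi)⟩⟩, by simp⟩
  -- `b₀` lists `K` under the index `true`; negating makes `K` the first block
  refine ⟨b₀.reindex σ.symm, fun p => !(σ p).1, ?_, fun p => ?_⟩
  · rintro (_ | _)
    · obtain ⟨p, hp⟩ := block_nonempty true hbot
      exact ⟨p, by simp [hp]⟩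
    · obtain ⟨p, hp⟩ := block_nonempty false (Submodule.orthogonal_eq_bot_iff.not.2 htop)
      exact ⟨p, by simp [hp]⟩
  · have := hInternal.collectedOrthonormalBasis_mem K.orthogonalFamily_self
      (fun i => stdOrthonormalBasis 𝕜 ↥(cond i K Kᗮ : Submodule 𝕜 _)) (σ p)
    cases h : (σ p).1 <;> simpa [b₀, h] using this

namespace Matrix

section ToSquareBlock

variable {m α R : Type*} [LinearOrder α]

theorem BlockTriangular.toSquareBlock_mul [Fintype m] [NonUnitalNonAssocSemiring R]
    {b : m → α} {M N : Matrix m m R} (hM : M.BlockTriangular b) (hN : N.BlockTriangular b)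
    (k : α) : (M * N).toSquareBlock b k = M.toSquareBlock b k * N.toSquareBlock b k := by
  classical
  ext ⟨p, rfl⟩ ⟨q, hq⟩
  have off_block : ∑ r : {r // ¬b r = b p}, M p r * N r q = 0 :=
    Fintype.sum_eq_zero _ fun ⟨r, hr⟩ => by
      rcases lt_or_gt_of_ne hr with h | h
      · rw [hM h, zero_mul]
      · rw [hN (hq.trans_lt h), mul_zero]
  rw [toSquareBlock_def, of_apply, mul_apply,
    ← Fintype.sum_subtype_add_sum_subtype (b · = b p), off_block, add_zero]
  rfl

variable [Fintype m] [DecidableEq m]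

theorem toSquareBlock_algebraMap {K : Type*} [CommSemiring K] [Semiring R] [Algebra K R]
    {b : m → α} (r : K) (k : α) :
    (algebraMap K (Matrix m m R) r).toSquareBlock b k =
      algebraMap K (Matrix {p // b p = k} {p // b p = k} R) r := by
  ext ⟨p, hp⟩ ⟨q, hq⟩
  simp [toSquareBlock_def, algebraMap_eq_diagonal, diagonal_apply, Subtype.ext_iff]

@[simps]
noncomputable def toSquareBlockAlgHom (K : Type*) [CommSemiring K] (b : m → α) (k : α) :
    blockTriangularSubalgebra K K b →ₐ[K] Matrix {p // b p = k} {p // b p = k} K where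
  toFun M := (M : Matrix m m K).toSquareBlock b k
  map_one' := by simpa using toSquareBlock_algebraMap (b := b) (R := K) (1 : K) k
  map_mul' M N := M.2.toSquareBlock_mul N.2 k
  map_zero' := rfl
  map_add' _ _ := rfl
  commutes' r := toSquareBlock_algebraMap r k

end ToSquareBlock

section FiberBlockDiagonal

variable {ι γ R : Type*} [DecidableEq γ] (c : ι → γ)

noncomputable def fiberBlockDiagonal [Zero R] (U : ∀ k, Matrix {p // c p = k} {p // c p = k} R) :
    Matrix ι ι R :=
  (blockDiagonal' U).submatrix (Equiv.sigmaFiberEquiv c).symm (Equiv.sigmaFiberEquiv c).symm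

variable {c}

theorem toSquareBlock_fiberBlockDiagonal [Zero R]
    (U : ∀ k, Matrix {p // c p = k} {p // c p = k} R) (k : γ) :
    (fiberBlockDiagonal c U).toSquareBlock c k = U k := by
  ext ⟨p, rfl⟩ ⟨q, hq⟩
  simp only [fiberBlockDiagonal, toSquareBlock_def, of_apply, submatrix_apply, blockDiagonal'_apply]
  rw [dif_pos (by exact hq.symm)]
  congr
  exact cast_eq_iff_heq.2 ((Subtype.heq_iff_coe_eq fun _ => Eq.congr_right hq).2 rfl)

theorem blockTriangular_fiberBlockDiagonal [Zero R] [Preorder γ]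
    (U : ∀ k, Matrix {p // c p = k} {p // c p = k} R) :
    (fiberBlockDiagonal c U).BlockTriangular c :=
  (blockTriangular_blockDiagonal' U).submatrix

theorem star_fiberBlockDiagonal [AddMonoid R] [StarAddMonoid R]
    (U : ∀ k, Matrix {p // c p = k} {p // c p = k} R) :
    star (fiberBlockDiagonal c U) = fiberBlockDiagonal c (fun k => star (U k)) := by
  simp only [fiberBlockDiagonal, star_eq_conjTranspose, conjTranspose_submatrix,
    blockDiagonal'_conjTranspose]

theorem fiberBlockDiagonal_one [DecidableEq ι] [Zero R] [One R] :
    fiberBlockDiagonal c (fun _ => 1) = (1 : Matrix ι ι R) := by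
  have : blockDiagonal' (fun k => (1 : Matrix {p // c p = k} {p // c p = k} R)) = 1 :=
    blockDiagonal'_one
  rw [fiberBlockDiagonal, this, submatrix_one_equiv]

variable [Fintype ι] [Fintype γ]

theorem fiberBlockDiagonal_mul [NonUnitalNonAssocSemiring R]
    (U V : ∀ k, Matrix {p // c p = k} {p // c p = k} R) :
    fiberBlockDiagonal c U * fiberBlockDiagonal c V =
      fiberBlockDiagonal c (fun k => U k * V k) := by
  rw [fiberBlockDiagonal, fiberBlockDiagonal, submatrix_mul_equiv, ← blockDiagonal'_mul]
  rfl

theorem fiberBlockDiagonal_mem_unitaryGroup [DecidableEq ι] [CommRing R] [StarRing R]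
    {U : ∀ k, Matrix {p // c p = k} {p // c p = k} R}
    (hU : ∀ k, U k ∈ unitaryGroup {p // c p = k} R) :
    fiberBlockDiagonal c U ∈ unitaryGroup ι R := by
  rw [mem_unitaryGroup_iff, star_fiberBlockDiagonal, fiberBlockDiagonal_mul]
  simp only [fun k => mem_unitaryGroup_iff.1 (hU k), fiberBlockDiagonal_one]

end FiberBlockDiagonal

section ConjFiberBlockDiagonal

variable {ι γ R : Type*} [Fintype ι] [LinearOrder γ] {c : ι → γ}
  [NonUnitalNonAssocSemiring R] [StarAddMonoid R]
  {U : ∀ k, Matrix {p // c p = k} {p // c p = k} R} {M : Matrix ι ι R}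

theorem BlockTriangular.conj_fiberBlockDiagonal (hM : M.BlockTriangular c) :
    (star (fiberBlockDiagonal c U) * M * fiberBlockDiagonal c U).BlockTriangular c :=
  ((star_fiberBlockDiagonal U ▸ blockTriangular_fiberBlockDiagonal _).mul hM).mul
    (blockTriangular_fiberBlockDiagonal U)

theorem BlockTriangular.toSquareBlock_conj_fiberBlockDiagonal (hM : M.BlockTriangular c)
    (k : γ) :
    (star (fiberBlockDiagonal c U) * M * fiberBlockDiagonal c U).toSquareBlock c k =
      star (U k) * M.toSquareBlock c k * U k := by
  have hW' : (star (fiberBlockDiagonal c U)).BlockTriangular c :=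
    star_fiberBlockDiagonal U ▸ blockTriangular_fiberBlockDiagonal _
  rw [(hW'.mul hM).toSquareBlock_mul (blockTriangular_fiberBlockDiagonal U),
    hW'.toSquareBlock_mul hM, star_fiberBlockDiagonal, toSquareBlock_fiberBlockDiagonal,
    toSquareBlock_fiberBlockDiagonal]

end ConjFiberBlockDiagonal

theorem star_basisFun_toMatrix_mul_mul_apply {𝕜 ι : Type*} [RCLike 𝕜] [Fintype ι]
    [DecidableEq ι] (b : OrthonormalBasis ι 𝕜 (EuclideanSpace 𝕜 ι)) (M : Matrix ι ι 𝕜)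
    (p q : ι) :
    (star ((EuclideanSpace.basisFun ι 𝕜).toBasis.toMatrix b) * M *
        (EuclideanSpace.basisFun ι 𝕜).toBasis.toMatrix b) p q =
      inner 𝕜 (b p) (WithLp.toLp 2 (M *ᵥ (b q).ofLp)) := by
  rw [mul_mul_apply, EuclideanSpace.inner_eq_star_dotProduct, dotProduct_comm]
  rfl

theorem exists_unitary_blockTriangular_of_invariant {𝕜 ι : Type*} [RCLike 𝕜] [Fintype ι]
    [DecidableEq ι] (S : Set (Matrix ι ι 𝕜)) (W : Submodule 𝕜 (ι → 𝕜))
    (hW : ∀ M ∈ S, ∀ v ∈ W, M *ᵥ v ∈ W) (hbot : W ≠ ⊥) (htop : W ≠ ⊤) :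
    ∃ V ∈ unitaryGroup ι 𝕜, ∃ c : ι → Bool,
      Function.Surjective c ∧ ∀ M ∈ S, (star V * M * V).BlockTriangular c := by
  let K := Submodule.orderIsoMapComap (WithLp.linearEquiv 2 𝕜 (ι → 𝕜)).symm W
  have mem_K {x : EuclideanSpace 𝕜 ι} : x ∈ K ↔ x.ofLp ∈ W := Submodule.mem_map_equiv W
  obtain ⟨b, c, hc, b_mem⟩ := K.exists_orthonormalBasis_mem_cond finrank_euclideanSpace
    ((map_eq_bot_iff _).not.2 hbot) ((map_eq_top_iff _).not.2 htop)
  refine ⟨_, (EuclideanSpace.basisFun ι 𝕜).toMatrix_orthonormalBasis_mem_unitary b, c, hc,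
    fun M hM p q hpq => ?_⟩
  obtain ⟨hq, hp⟩ := Bool.lt_iff.1 hpq
  have hq : b q ∈ K := by simpa [hq] using b_mem q
  have hp : b p ∈ Kᗮ := by simpa [hp] using b_mem p
  exact (star_basisFun_toMatrix_mul_mul_apply b M p q).trans
    (Submodule.inner_left_of_mem_orthogonal (mem_K.2 (hW M hM _ (mem_K.1 hq))) hp)

theorem subalgebra_eq_top_of_isSimpleModule {k ι : Type*} [Field k] [IsAlgClosed k]
    [Fintype ι] [DecidableEq ι] (𝒜 : Subalgebra k (Matrix ι ι k)) [IsSimpleModule 𝒜 (ι → k)] :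
    𝒜 = ⊤ := by
  have hscalar := IsSimpleModule.algebraMap_end_bijective_of_isAlgClosed k (A := 𝒜) (V := ι → k)
  have : Module.Finite (Module.End 𝒜 (ι → k)) (ι → k) := .of_restrictScalars_finite k _ _
  refine eq_top_iff.2 fun X _ => ?_
  let f : Module.End (Module.End 𝒜 (ι → k)) (ι → k) :=
    { toFun := (X *ᵥ ·)
      map_add' := mulVec_add X
      map_smul' := fun g v => by
        obtain ⟨c, rfl⟩ := hscalar.2 g
        exact mulVec_smul X c v }
  obtain ⟨M, hM⟩ := Module.Finite.toModuleEnd_moduleEnd_surjective (R := 𝒜) (M := ι → k) f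
  have : (M : Matrix ι ι k) = X := ext_iff_mulVec.2 fun v => LinearMap.congr_fun hM v
  exact this ▸ M.2

end Matrix

namespace Subalgebra

variable {ι 𝕜 : Type*} [Fintype ι] [DecidableEq ι] [CommRing 𝕜]

noncomputable def diagonalBlock {γ : Type*} [LinearOrder γ] {c : ι → γ}
    {𝒜 : Subalgebra 𝕜 (Matrix ι ι 𝕜)} (hc : 𝒜 ≤ blockTriangularSubalgebra 𝕜 𝕜 c) (k : γ) :
    Subalgebra 𝕜 (Matrix {p // c p = k} {p // c p = k} 𝕜) :=
  ((toSquareBlockAlgHom 𝕜 c k).comp (Subalgebra.inclusion hc)).range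

theorem mem_diagonalBlock {γ : Type*} [LinearOrder γ] {c : ι → γ}
    {𝒜 : Subalgebra 𝕜 (Matrix ι ι 𝕜)} {hc : 𝒜 ≤ blockTriangularSubalgebra 𝕜 𝕜 c} {k : γ}
    {N : Matrix {p // c p = k} {p // c p = k} 𝕜} :
    N ∈ 𝒜.diagonalBlock hc k ↔ ∃ M ∈ 𝒜, M.toSquareBlock c k = N := by
  simp [diagonalBlock]

variable [StarRing 𝕜]

/-- Blocks are the fibres of `b`, ordered by `β`, rather than intervals of `Fin n`, so that
refining blocks (`IsBurnsideForm.of_diagonalBlock`) needs no index arithmetic. -/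
structure IsBurnsideForm {β : Type*} [LT β] (𝒜 : Subalgebra 𝕜 (Matrix ι ι 𝕜))
    (U : Matrix ι ι 𝕜) (b : ι → β) : Prop where
  unitary : U ∈ unitaryGroup ι 𝕜
  surjective : Function.Surjective b
  blockTriangular : ∀ M ∈ 𝒜, (star U * M * U).BlockTriangular b
  toSquareBlock_surjective : ∀ (k : β) (N : Matrix {p // b p = k} {p // b p = k} 𝕜),
    ∃ M ∈ 𝒜, (star U * M * U).toSquareBlock b k = N

theorem isBurnsideForm_top [Nonempty ι] :
    (⊤ : Subalgebra 𝕜 (Matrix ι ι 𝕜)).IsBurnsideForm 1 (fun _ => PUnit.unit) where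
  unitary := one_mem _
  surjective _ := ⟨Classical.arbitrary ι, rfl⟩
  blockTriangular _ _ _ _ h := absurd h (lt_irrefl _)
  toSquareBlock_surjective _ N := ⟨N.submatrix (fun p => ⟨p, rfl⟩) (fun p => ⟨p, rfl⟩),
    Algebra.mem_top, by ext; simp [toSquareBlock_def]⟩

variable {𝒜 : Subalgebra 𝕜 (Matrix ι ι 𝕜)}

theorem IsBurnsideForm.of_map_conj {β : Type*} [LT β] {U : Matrix ι ι 𝕜} {b : ι → β}
    {V : unitaryGroup ι 𝕜}
    (h : (𝒜.map (Unitary.conjStarAlgAut 𝕜 _ (star V) : Matrix ι ι 𝕜 →ₐ[𝕜] Matrix ι ι 𝕜)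
      ).IsBurnsideForm U b) :
    𝒜.IsBurnsideForm (V * U) b := by
  have conj_mul (M : Matrix ι ι 𝕜) :
      star (V * U) * M * (V * U) = star U * Unitary.conjStarAlgAut 𝕜 _ (star V) M * U := by
    simp [Matrix.mul_assoc, star_mul]
  refine ⟨mul_mem V.2 h.unitary, h.surjective, fun M hM => ?_, fun k N => ?_⟩
  · rw [conj_mul]
    exact h.blockTriangular _ (mem_map.2 ⟨M, hM, rfl⟩)
  · obtain ⟨_, hM', hN⟩ := h.toSquareBlock_surjective k N
    obtain ⟨M, hM, rfl⟩ := mem_map.1 hM'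
    exact ⟨M, hM, by rwa [conj_mul]⟩

theorem IsBurnsideForm.of_diagonalBlock {γ : Type*} [LinearOrder γ] [Fintype γ] {c : ι → γ}
    {hc : 𝒜 ≤ blockTriangularSubalgebra 𝕜 𝕜 c} {β : γ → Type*} [∀ k, LinearOrder (β k)]
    {U : ∀ k, Matrix {p // c p = k} {p // c p = k} 𝕜} {b : ∀ k, {p // c p = k} → β k}
    (h : ∀ k, (𝒜.diagonalBlock hc k).IsBurnsideForm (U k) (b k)) :
    𝒜.IsBurnsideForm (fiberBlockDiagonal c U) (sigmaLexRefine c b) := by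
  set W := fiberBlockDiagonal c U
  refine ⟨fiberBlockDiagonal_mem_unitaryGroup fun k => (h k).unitary,
    sigmaLexRefine_surjective fun k => (h k).surjective, fun M hM p q hlt => ?_, ?_⟩
  · rcases sigmaLexRefine_lt_iff.1 hlt with hcq | ⟨hcq, hlt⟩
    · exact (hc hM).conj_fiberBlockDiagonal hcq
    · have := (h (c p)).blockTriangular _ (mem_diagonalBlock.2 ⟨M, hM, rfl⟩) hlt
      rwa [← (hc hM).toSquareBlock_conj_fiberBlockDiagonal] at this
  · intro kj N
    let e := sigmaLexRefineFiberEquiv (b := b) kj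
    obtain ⟨_, hZ, hZN⟩ := (h _).toSquareBlock_surjective _ (N.submatrix e e)
    obtain ⟨M, hM, rfl⟩ := mem_diagonalBlock.1 hZ
    refine ⟨M, hM, ?_⟩
    calc _ = (((star W * M * W).toSquareBlock c _).toSquareBlock (b _) _).submatrix e.symm e.symm :=
          rfl
      _ = N := by
        rw [(hc hM).toSquareBlock_conj_fiberBlockDiagonal, hZN]
        simp

universe u

theorem exists_isBurnsideForm {ι : Type u} [Fintype ι] [DecidableEq ι] [Nonempty ι]
    (𝒜 : Subalgebra ℂ (Matrix ι ι ℂ)) :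
    ∃ (β : Type u) (_ : LinearOrder β) (_ : Fintype β) (b : ι → β) (U : Matrix ι ι ℂ),
      𝒜.IsBurnsideForm U b := by
  induction h : Fintype.card ι using Nat.strong_induction_on generalizing ι with
  | _ n ih =>
  by_cases hsimple : IsSimpleModule 𝒜 (ι → ℂ)
  · rw [subalgebra_eq_top_of_isSimpleModule 𝒜]
    exact ⟨PUnit, inferInstance, inferInstance, _, _, isBurnsideForm_top⟩
  obtain ⟨W, hbot, htop⟩ : ∃ W : Submodule 𝒜 (ι → ℂ), W ≠ ⊥ ∧ W ≠ ⊤ := by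
    by_contra! hW
    exact hsimple ((isSimpleModule_iff _ _).2
      { eq_bot_or_eq_top := fun W => or_iff_not_imp_left.2 (hW W) })
  obtain ⟨V, hV, c, hc_surj, hc⟩ := exists_unitary_blockTriangular_of_invariant 𝒜
    (W.restrictScalars ℂ) (fun M hM v hv => W.smul_mem ⟨M, hM⟩ hv)
    ((Submodule.restrictScalars_eq_bot_iff _ _ _).not.2 hbot)
    ((Submodule.restrictScalars_eq_top_iff _ _ _).not.2 htop)
  let 𝒜' := 𝒜.map (Unitary.conjStarAlgAut ℂ _ (star ⟨V, hV⟩) : Matrix ι ι ℂ →ₐ[ℂ] Matrix ι ι ℂ)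
  have h𝒜' : 𝒜' ≤ blockTriangularSubalgebra ℂ ℂ c := by
    rintro _ ⟨M, hM, rfl⟩
    simpa using hc M hM
  have fiber_card (k : Bool) : Fintype.card {p // c p = k} < n := by
    obtain ⟨p, hp⟩ := hc_surj (!k)
    exact h ▸ Fintype.card_subtype_lt (p := (c · = k)) (x := p) (by simp [hp])
  have (k : Bool) : Nonempty {p // c p = k} := let ⟨p, hp⟩ := hc_surj k; ⟨⟨p, hp⟩⟩
  choose β _ _ b U hU using fun k => ih _ (fiber_card k) (𝒜'.diagonalBlock h𝒜' k) rfl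
  exact ⟨Σₗ k, β k, inferInstance, inferInstance, _, _,
    (IsBurnsideForm.of_diagonalBlock hU).of_map_conj⟩

end Subalgebra

/-- **Burnside decomposition.** Every unital `ℂ`-subalgebra of `Matrix (Fin n) (Fin n) ℂ`
can be put, by a unitary change of basis, into block upper triangular form whose
diagonal blocks are full matrix algebras. -/
theorem subalgebra_block_upper_triangular_full_diagonal_blocks
    (n : ℕ) (hn : 1 ≤ n) (𝒜 : Subalgebra ℂ (Matrix (Fin n) (Fin n) ℂ)) :
    ∃ (m : ℕ) (_ : 1 ≤ m) (d : Fin m → ℕ) (_ : ∀ i, 1 ≤ d i) (_ : ∑ i, d i = n)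
      (e : (Σ i : Fin m, Fin (d i)) ≃ Fin n)
      (U : Matrix (Fin n) (Fin n) ℂ), U ∈ Matrix.unitaryGroup (Fin n) ℂ ∧
      (∀ M ∈ 𝒜, ∀ i j : Fin m, j < i →
        ∀ (a : Fin (d i)) (b : Fin (d j)),
          (star U * M * U) (e ⟨i, a⟩) (e ⟨j, b⟩) = 0) ∧
      (∀ i : Fin m, ∀ N : Matrix (Fin (d i)) (Fin (d i)) ℂ,
        ∃ M ∈ 𝒜, ∀ (a b : Fin (d i)),
          (star U * M * U) (e ⟨i, a⟩) (e ⟨i, b⟩) = N a b) := by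
  have : Nonempty (Fin n) := ⟨⟨0, hn⟩⟩
  obtain ⟨β, _, _, blk, U, hU⟩ := 𝒜.exists_isBurnsideForm
  let o := Fintype.orderIsoFinOfCardEq β rfl
  let fiberEquiv (i : Fin (Fintype.card β)) := Fintype.equivFin {p // blk p = o i}
  let e : (Σ i, Fin (Fintype.card {p // blk p = o i})) ≃ Fin n :=
    (Equiv.sigmaCongrRight fun i => (fiberEquiv i).symm).trans
      ((Equiv.sigmaCongrLeft o.toEquiv).trans (Equiv.sigmaFiberEquiv blk))
  have blk_e (i a) : blk (e ⟨i, a⟩) = o i := ((fiberEquiv i).symm a).2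
  refine ⟨Fintype.card β, Fintype.card_pos_iff.2 ⟨blk (Classical.arbitrary _)⟩, _,
    fun i => Fintype.card_pos_iff.2 (let ⟨p, hp⟩ := hU.surjective (o i); ⟨⟨p, hp⟩⟩),
    by simpa using Fintype.card_congr e, e, U, hU.unitary,
    fun M hM i j hji a b => hU.blockTriangular M hM (by rwa [blk_e, blk_e, o.lt_iff_lt]),
    fun i N => ?_⟩
  obtain ⟨M, hM, hMN⟩ :=
    hU.toSquareBlock_surjective (o i) (N.submatrix (fiberEquiv i) (fiberEquiv i))
  refine ⟨M, hM, fun a b => ?_⟩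
  have := congr_fun₂ hMN ((fiberEquiv i).symm a) ((fiberEquiv i).symm b)
  rwa [submatrix_apply, Equiv.apply_symm_apply, Equiv.apply_symm_apply] at this
end

section
/- Let n ≥ 1 and let H, K : Matrix (Fin n × Fin 2) (Fin n × Fin 2) ℂ with Hᴴ = H. Assume: (1) K is the diagonal matrix with paired eigenvalues determined by an injective k : Fin n → ℝ; (2) the Burnside graph of the pair (H, K) (the relation E on Fin n × Fin 2 with E p q ↔ p ≠ q ∧ (H p q ≠ 0 ∨ K p q ≠ 0)) is strongly connected, i.e. ∀ p q, Relation.ReflTransGen E p q; (3) all top-row 2-blocks of H are invertible: for every j : Fin n, IsUnit (blk H 0 j); (4) there exist j, j' : Fin n with j ≠ j' such that the matrices (blk H 0 j) * (blk H 0 j)ᴴ and (blk H 0 j') * (blk H 0 j')ᴴ do not commute. Then Algebra.adjoin ℂ {H, K} = ⊤, i.e. H and K generate the full matrix algebra M_{2n}(ℂ). -/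
open Matrix

/-- The `(i, j)` 2-block of a `2n × 2n` matrix indexed by `Fin n × Fin 2`. -/
def blk {n : ℕ} (M : Matrix (Fin n × Fin 2) (Fin n × Fin 2) ℂ) (i j : Fin n) :
    Matrix (Fin 2) (Fin 2) ℂ :=
  Matrix.of fun a b => M (i, a) (j, b)

open scoped Kronecker ComplexOrder

/-!
The matrix with `2 × 2` block `B` at block position `(i, j)` and zeros elsewhere is
`single i j 1 ⊗ₖ B`. The block projections `single i i 1 ⊗ₖ 1` are polynomials in `K`
(Lagrange interpolation at its distinct eigenvalues), so the algebra generated by `H` and `K`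
contains every block `single i j 1 ⊗ₖ Hᵢⱼ` of `H`, and hence, in the corner `(0, 0)`, the
hermitian matrices `H₀ⱼ H₀ⱼᴴ = H₀ⱼ Hⱼ₀`. Two non-commuting hermitian `2 × 2` matrices `A`, `B`
generate `M₂(ℂ)`: their commutator `C` is skew-hermitian and nonzero, so `tr C² ≠ 0`, while
`tr C = tr (A C) = tr (B C) = 0`; pairing with `C` under the trace form then shows that
`1, A, B, C` are linearly independent. Finally the invertible blocks `H₀ⱼ` and `Hⱼ₀ = H₀ⱼᴴ`
move the full corner to every block position.
-/

namespace Matrix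

section Commutator

variable {m R : Type*} [Fintype m]

theorem trace_commutator [CommRing R] (A B : Matrix m m R) : trace (A * B - B * A) = 0 := by
  rw [trace_sub, trace_mul_comm, sub_self]

theorem trace_mul_commutator_left [CommRing R] (A B : Matrix m m R) :
    trace (A * (A * B - B * A)) = 0 := by
  rw [Matrix.mul_sub, trace_sub, ← Matrix.mul_assoc A B A, trace_mul_comm (A * B) A, sub_self]

theorem trace_mul_commutator_right [CommRing R] (A B : Matrix m m R) :
    trace (B * (A * B - B * A)) = 0 := by
  rw [Matrix.mul_sub, trace_sub, ← Matrix.mul_assoc B A B, trace_mul_comm (B * A) B, sub_self]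

variable [DecidableEq m]

theorem linearIndependent_one_commutator [Field R] {A B : Matrix m m R}
    (h : trace ((A * B - B * A) ^ 2) ≠ 0) :
    LinearIndependent R ![1, A, B, A * B - B * A] := by
  have tC := trace_commutator A B
  have tAC := trace_mul_commutator_left A B
  have tBC := trace_mul_commutator_right A B
  rw [sq] at h
  generalize hC_def : A * B - B * A = C at *
  have hC : C ≠ 0 := by rintro rfl; simp at h
  rw [Fintype.linearIndependent_iff]
  intro g hg
  have hsum : g 0 • 1 + g 1 • A + g 2 • B + g 3 • C = 0 := by
    simpa [Fin.sum_univ_four] using hg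
  have hg3 : g 3 = 0 := by
    have := congrArg (fun X => trace (X * C)) hsum
    simp only [add_mul, smul_mul_assoc, trace_add, trace_smul, one_mul, zero_mul, trace_zero,
      tC, tAC, tBC, smul_eq_mul] at this
    simpa [h] using this
  have hg1 : g 1 = 0 := by
    have := congrArg (fun X => X * B - B * X) hsum
    simp only [hg3, zero_smul, add_zero, add_mul, mul_add, smul_mul_assoc, mul_smul_comm,
      one_mul, mul_one, zero_mul, mul_zero, sub_self] at this
    have : g 1 • C = 0 := by rw [← hC_def, ← this]; module
    simpa [hC] using this
  have hg2 : g 2 = 0 := by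
    have := congrArg (fun X => A * X - X * A) hsum
    simp only [hg3, hg1, zero_smul, add_zero, add_mul, mul_add, smul_mul_assoc,
      mul_smul_comm, one_mul, mul_one, zero_mul, mul_zero, sub_self] at this
    have : g 2 • C = 0 := by rw [← hC_def, ← this]; module
    simpa [hC] using this
  have hg0 : g 0 = 0 := by
    simp only [hg1, hg2, hg3, zero_smul, add_zero, smul_eq_zero] at hsum
    exact hsum.resolve_right fun hone => hC (by rw [← C.mul_one, hone, C.mul_zero])
  intro i
  fin_cases i <;> assumption

theorem adjoin_pair_eq_top_of_trace_commutator_sq_ne_zero [Field R]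
    {A B : Matrix (Fin 2) (Fin 2) R} (h : trace ((A * B - B * A) ^ 2) ≠ 0) :
    Algebra.adjoin R {A, B} = ⊤ := by
  have hspan := (linearIndependent_one_commutator h).span_eq_top_of_card_eq_finrank'
    (by simp [Module.finrank_matrix])
  rw [← Algebra.toSubmodule_eq_top, eq_top_iff, ← hspan, Submodule.span_le]
  have hA : A ∈ Algebra.adjoin R {A, B} := Algebra.subset_adjoin (by simp)
  have hB : B ∈ Algebra.adjoin R {A, B} := Algebra.subset_adjoin (by simp)
  rintro _ ⟨i, rfl⟩
  fin_cases i
  · exact Subalgebra.one_mem _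
  · exact hA
  · exact hB
  · exact Subalgebra.sub_mem _ (Subalgebra.mul_mem _ hA hB) (Subalgebra.mul_mem _ hB hA)

theorem trace_commutator_sq_ne_zero [CommRing R] [PartialOrder R] [StarRing R]
    [StarOrderedRing R] [NoZeroDivisors R] {A B : Matrix m m R}
    (hA : A.IsHermitian) (hB : B.IsHermitian) (h : A * B ≠ B * A) :
    trace ((A * B - B * A) ^ 2) ≠ 0 := by
  have hskew : (A * B - B * A)ᴴ = -(A * B - B * A) := by
    rw [conjTranspose_sub, conjTranspose_mul, conjTranspose_mul, hA.eq, hB.eq, neg_sub]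
  have hsq : (A * B - B * A) ^ 2 = -((A * B - B * A)ᴴ * (A * B - B * A)) := by
    rw [hskew, neg_mul, neg_neg, sq]
  rwa [hsq, trace_neg, neg_ne_zero, Ne, trace_conjTranspose_mul_self_eq_zero_iff, sub_eq_zero]

end Commutator

theorem diagonal_indicator_mem_adjoin_diagonal {ι m F : Type*} [Fintype ι] [DecidableEq ι]
    [Fintype m] [DecidableEq m] [Field F] {v : ι → F} (hv : Function.Injective v) (e : m → ι)
    (i : ι) :
    diagonal (fun p => if e p = i then 1 else 0) ∈ Algebra.adjoin F {diagonal (v ∘ e)} := by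
  rw [Algebra.adjoin_singleton_eq_range_aeval]
  refine ⟨Lagrange.basis Finset.univ v i, ?_⟩
  change Polynomial.aeval (diagonalAlgHom F (v ∘ e)) _ = _
  rw [Polynomial.aeval_algHom_apply, Polynomial.aeval_pi_apply, diagonalAlgHom_apply]
  congr 1
  funext p
  split_ifs with hp
  · simp [← hp, Lagrange.eval_basis_self hv.injOn (Finset.mem_univ _)]
  · exact Lagrange.eval_basis_of_ne (Ne.symm hp) (Finset.mem_univ _)

section Kronecker

variable {R ι κ : Type*} [CommRing R] [DecidableEq ι] [DecidableEq κ]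

theorem diagonal_indicator_fst_eq_single_kronecker_one (i : ι) :
    diagonal (fun p : ι × κ => if p.1 = i then (1 : R) else 0) = single i i 1 ⊗ₖ 1 := by
  rw [← diagonal_single, ← diagonal_one, diagonal_kronecker_diagonal]
  congr 1
  funext p
  simp [Pi.single_apply]

theorem single_kronecker_one_mem_adjoin_diagonal [Fintype ι] [Fintype κ] {F : Type*} [Field F]
    {v : ι → F} (hv : Function.Injective v) (i : ι) :
    single i i 1 ⊗ₖ 1 ∈ Algebra.adjoin F {diagonal (v ∘ Prod.fst : ι × κ → F)} := by
  rw [← diagonal_indicator_fst_eq_single_kronecker_one]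
  exact diagonal_indicator_mem_adjoin_diagonal hv Prod.fst i

variable [Fintype ι] [Fintype κ]

omit [DecidableEq κ] in
theorem single_kronecker_mul_single_kronecker (i j l : ι) (B C : Matrix κ κ R) :
    (single i j 1 ⊗ₖ B) * (single j l 1 ⊗ₖ C) = single i l 1 ⊗ₖ (B * C) := by
  rw [← mul_kronecker_mul, single_mul_single_same, one_mul]

def cornerSubalgebra (A : Subalgebra R (Matrix (ι × κ) (ι × κ) R)) (i : ι)
    (hi : single i i 1 ⊗ₖ 1 ∈ A) : Subalgebra R (Matrix κ κ R) where
  carrier := {B | single i i 1 ⊗ₖ B ∈ A}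
  mul_mem' {B C} hB hC := by
    change _ ∈ A
    rw [← single_kronecker_mul_single_kronecker]
    exact A.mul_mem hB hC
  one_mem' := hi
  add_mem' {B C} hB hC := by
    change _ ∈ A
    rw [kronecker_add]
    exact A.add_mem hB hC
  zero_mem' := by
    change _ ∈ A
    rw [kronecker_zero]
    exact A.zero_mem
  algebraMap_mem' r := by
    change _ ∈ A
    rw [Algebra.algebraMap_eq_smul_one, kronecker_smul]
    exact A.smul_mem hi r

variable {A : Subalgebra R (Matrix (ι × κ) (ι × κ) R)}

theorem single_kronecker_mem_of_isUnit_right {i j : ι} (hii : ∀ B, single i i 1 ⊗ₖ B ∈ A)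
    {X : Matrix κ κ R} (hX : single i j 1 ⊗ₖ X ∈ A) (hXu : IsUnit X) (B : Matrix κ κ R) :
    single i j 1 ⊗ₖ B ∈ A := by
  obtain ⟨u, rfl⟩ := hXu
  have hB : single i j 1 ⊗ₖ B =
      (single i i 1 ⊗ₖ (B * (↑u⁻¹ : Matrix κ κ R))) * (single i j 1 ⊗ₖ ↑u) := by
    rw [single_kronecker_mul_single_kronecker, mul_assoc, Units.inv_mul, mul_one]
  exact hB ▸ A.mul_mem (hii _) hX

theorem single_kronecker_mem_of_isUnit_left {i j : ι} (hjj : ∀ B, single j j 1 ⊗ₖ B ∈ A)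
    {X : Matrix κ κ R} (hX : single i j 1 ⊗ₖ X ∈ A) (hXu : IsUnit X) (B : Matrix κ κ R) :
    single i j 1 ⊗ₖ B ∈ A := by
  obtain ⟨u, rfl⟩ := hXu
  have hB : single i j 1 ⊗ₖ B =
      (single i j 1 ⊗ₖ ↑u) * (single j j 1 ⊗ₖ ((↑u⁻¹ : Matrix κ κ R) * B)) := by
    rw [single_kronecker_mul_single_kronecker, ← mul_assoc, Units.mul_inv, one_mul]
  exact hB ▸ A.mul_mem hX (hjj _)

theorem eq_top_of_single_kronecker_mem (h : ∀ i j B, single i j 1 ⊗ₖ B ∈ A) : A = ⊤ := by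
  refine eq_top_iff.2 fun M _ => ?_
  rw [matrix_eq_sum_single M]
  refine A.sum_mem fun p _ => A.sum_mem fun q _ => ?_
  simpa only [single_kronecker_single, one_mul] using h p.1 q.1 (single p.2 q.2 (M p q))

theorem eq_top_of_cornerSubalgebra_eq_top {z : ι} {hz : single z z 1 ⊗ₖ 1 ∈ A}
    (h : cornerSubalgebra A z hz = ⊤) {X Y : ι → Matrix κ κ R}
    (hX : ∀ l, single z l 1 ⊗ₖ X l ∈ A) (hXu : ∀ l, IsUnit (X l))
    (hY : ∀ l, single l z 1 ⊗ₖ Y l ∈ A) (hYu : ∀ l, IsUnit (Y l)) : A = ⊤ := by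
  have hzz : ∀ B, single z z 1 ⊗ₖ B ∈ A := fun B =>
    show B ∈ cornerSubalgebra A z hz from h ▸ Algebra.mem_top
  refine eq_top_of_single_kronecker_mem fun i j B => ?_
  rw [← mul_one B, ← single_kronecker_mul_single_kronecker i z j]
  exact A.mul_mem (single_kronecker_mem_of_isUnit_left hzz (hY i) (hYu i) B)
    (single_kronecker_mem_of_isUnit_right hzz (hX j) (hXu j) 1)

end Kronecker

end Matrix

theorem conjTranspose_blk {n : ℕ} (M : Matrix (Fin n × Fin 2) (Fin n × Fin 2) ℂ) (i j : Fin n) :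
    (blk M i j)ᴴ = blk Mᴴ j i := rfl

theorem single_kronecker_one_mul_mul_single_kronecker_one {n : ℕ}
    (M : Matrix (Fin n × Fin 2) (Fin n × Fin 2) ℂ) (i j : Fin n) :
    (single i i 1 ⊗ₖ 1) * M * (single j j 1 ⊗ₖ 1) = single i j 1 ⊗ₖ blk M i j := by
  rw [← diagonal_indicator_fst_eq_single_kronecker_one,
    ← diagonal_indicator_fst_eq_single_kronecker_one]
  ext ⟨p, a⟩ ⟨q, b⟩
  rw [mul_diagonal, diagonal_mul, kronecker_apply, single_apply]
  by_cases hp : i = p <;> by_cases hq : j = q <;> simp [hp, hq, blk, eq_comm]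

theorem even_order_constructibility_special_case_general
    (n : ℕ) (hn : 0 < n)
    (H K : Matrix (Fin n × Fin 2) (Fin n × Fin 2) ℂ)
    (hH : Hᴴ = H)
    (k : Fin n → ℝ) (hk : Function.Injective k)
    (hK : ∀ p q : Fin n × Fin 2, K p q = if p = q then (k p.1 : ℂ) else 0)
    (hinv : ∀ j : Fin n, IsUnit (blk H ⟨0, hn⟩ j))
    (hnc : ∃ j j' : Fin n, j ≠ j' ∧
      (blk H ⟨0, hn⟩ j * (blk H ⟨0, hn⟩ j)ᴴ) * (blk H ⟨0, hn⟩ j' * (blk H ⟨0, hn⟩ j')ᴴ) ≠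
      (blk H ⟨0, hn⟩ j' * (blk H ⟨0, hn⟩ j')ᴴ) * (blk H ⟨0, hn⟩ j * (blk H ⟨0, hn⟩ j)ᴴ)) :
    Algebra.adjoin ℂ {H, K} = ⊤ := by
  set A := Algebra.adjoin ℂ {H, K}
  set z : Fin n := ⟨0, hn⟩
  have hKdiag : K = diagonal ((fun i => (k i : ℂ)) ∘ Prod.fst) := by
    ext p q
    rw [hK, diagonal_apply, Function.comp_apply]
  have hP : ∀ i, single i i 1 ⊗ₖ 1 ∈ A := fun i =>
    Algebra.adjoin_mono (by simp [hKdiag])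
      (single_kronecker_one_mem_adjoin_diagonal (Complex.ofReal_injective.comp hk) i)
  have hblk : ∀ i j, single i j 1 ⊗ₖ blk H i j ∈ A := fun i j => by
    rw [← single_kronecker_one_mul_mul_single_kronecker_one]
    exact A.mul_mem (A.mul_mem (hP i) (Algebra.subset_adjoin (by simp))) (hP j)
  have hblkH : ∀ i j, (blk H i j)ᴴ = blk H j i := fun i j => by rw [conjTranspose_blk, hH]
  have hmem : ∀ l, blk H z l * (blk H z l)ᴴ ∈ cornerSubalgebra A z (hP z) := fun l => by
    change _ ∈ A
    rw [hblkH, ← single_kronecker_mul_single_kronecker]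
    exact A.mul_mem (hblk z l) (hblk l z)
  obtain ⟨j, j', -, hjj'⟩ := hnc
  have hcorner : cornerSubalgebra A z (hP z) = ⊤ := by
    rw [eq_top_iff, ← adjoin_pair_eq_top_of_trace_commutator_sq_ne_zero
      (trace_commutator_sq_ne_zero (isHermitian_mul_conjTranspose_self _)
        (isHermitian_mul_conjTranspose_self _) hjj')]
    exact Algebra.adjoin_le (Set.pair_subset (hmem j) (hmem j'))
  exact eq_top_of_cornerSubalgebra_eq_top hcorner (hblk z) hinv (fun l => hblk l z)
    fun l => hblkH z l ▸ (hinv l).star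

/-- **Even-order constructibility, special case.** If `K` is diagonal with `n`
distinct real eigenvalues each of multiplicity 2, the Burnside graph of the pair
`(H, K)` is strongly connected, the top-row 2-blocks of `H` are all invertible,
and two of them `H₀ⱼ`, `H₀ⱼ'` are such that `H₀ⱼ H₀ⱼᴴ` and `H₀ⱼ' H₀ⱼ'ᴴ` do not
commute, then `H` and `K` generate the full matrix algebra `M_{2n}(ℂ)`. -/
theorem even_order_constructibility_special_case
    (n : ℕ) (hn : 0 < n)
    (H K : Matrix (Fin n × Fin 2) (Fin n × Fin 2) ℂ)
    (hH : Hᴴ = H)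
    (k : Fin n → ℝ) (hk : Function.Injective k)
    (hK : ∀ p q : Fin n × Fin 2, K p q = if p = q then (k p.1 : ℂ) else 0)
    (hconn : ∀ p q : Fin n × Fin 2,
      Relation.ReflTransGen (fun p q => p ≠ q ∧ (H p q ≠ 0 ∨ K p q ≠ 0)) p q)
    (hinv : ∀ j : Fin n, IsUnit (blk H ⟨0, hn⟩ j))
    (hnc : ∃ j j' : Fin n, j ≠ j' ∧
      (blk H ⟨0, hn⟩ j * (blk H ⟨0, hn⟩ j)ᴴ) * (blk H ⟨0, hn⟩ j' * (blk H ⟨0, hn⟩ j')ᴴ) ≠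
      (blk H ⟨0, hn⟩ j' * (blk H ⟨0, hn⟩ j')ᴴ) * (blk H ⟨0, hn⟩ j * (blk H ⟨0, hn⟩ j)ᴴ)) :
    Algebra.adjoin ℂ {H, K} = ⊤ :=
  even_order_constructibility_special_case_general n hn H K hH k hk hK hinv hnc
end

section
/- (Laffey's Generation Theorem.) Let F be a field, n > 1, k ≥ 1, let A : Fin k → Matrix (Fin n) (Fin n) F, let d : Fin n → F be injective, and set B := Matrix.diagonal d. Let 𝒜 := Algebra.adjoin F (Set.range A ∪ {B}). Then the following are equivalent: (1) 𝒜 is a simple ring (IsSimpleRing ↥𝒜); (2) 𝒜 = ⊤, i.e. 𝒜 is the full matrix algebra M_n(F); (3) the Burnside graph of A is strongly connected. -/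
/-!
Lagrange interpolation in `B` puts the diagonal matrix units `Eᵢᵢ` into `𝒜`, and
`Eᵢᵢ Aₘ Eⱼⱼ = (Aₘ)ᵢⱼ Eᵢⱼ`, so every edge `i → j` of the Burnside graph gives `Eᵢⱼ ∈ 𝒜`; along
paths these multiply, so strong connectivity yields every matrix unit and `𝒜 = Mₙ(F)`, which is
simple. Conversely, if `j` is not reachable from `i`, the set `S` of vertices reachable from `i`
is closed under edges, so all generators, hence all of `𝒜`, are block triangular for `S`.
Compression to the `S`-block is then a ring homomorphism from `𝒜` to the nonzero ring `M_S(F)`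
that kills `Eⱼⱼ ≠ 0`, so `𝒜` is not simple.
-/

open Polynomial

namespace Matrix

variable {ι : Type*}

def burnsideGraph {κ R : Type*} [Zero R] (A : κ → Matrix ι ι R) (i j : ι) : Prop :=
  i ≠ j ∧ ∃ m, A m i j ≠ 0

theorem blockTriangular_of_burnsideGraph_closed {κ R : Type*} [Zero R] {A : κ → Matrix ι ι R}
    {p : ι → Prop} (hp : ∀ i j, p i → burnsideGraph A i j → p j) (m : κ) :
    (A m).BlockTriangular p := by
  intro i j hji
  obtain ⟨hi, hj⟩ := Classical.not_imp.1 (not_le.2 hji)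
  by_contra hm
  exact hj (hp i j hi ⟨fun h => hj (h ▸ hi), m, hm⟩)

variable [Fintype ι] [DecidableEq ι]

theorem aeval_diagonal {R : Type*} [CommSemiring R] (d : ι → R) (p : R[X]) :
    aeval (diagonal d) p = diagonal fun i => p.eval (d i) := by
  rw [← diagonalAlgHom_apply R, aeval_algHom_apply, aeval_pi_apply]
  simp only [diagonalAlgHom_apply, coe_aeval_eq_eval]

theorem eq_top_of_forall_single_mem {R : Type*} [CommSemiring R]
    {𝒜 : Subalgebra R (Matrix ι ι R)} (h : ∀ i j, single i j (1 : R) ∈ 𝒜) : 𝒜 = ⊤ := by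
  refine Algebra.eq_top_iff.2 fun M => ?_
  rw [matrix_eq_sum_single M]
  refine Subalgebra.sum_mem _ fun i _ => Subalgebra.sum_mem _ fun j _ => ?_
  simpa [smul_single] using 𝒜.smul_mem (h i j) (M i j)

section BlockTriangular

variable {R : Type*} [CommRing R]

def blockTriangularToSquareBlock (p : ι → Prop) [DecidablePred p] :
    blockTriangularSubalgebra R R p →+* Matrix {i // p i} {i // p i} R where
  toFun M := (M : Matrix ι ι R).toSquareBlockProp p
  map_one' := toBlock_one_self p
  map_mul' M N := by
    have hM : toBlock (M : Matrix ι ι R) p (fun i => ¬p i) = 0 := by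
      ext i j
      exact M.2 (show p j < p i from lt_of_le_of_ne (by simp [j.2]) (by simp [i.2, j.2]))
    simp [toSquareBlockProp, toBlock_mul_eq_add (q := p), hM]
  map_zero' := rfl
  map_add' _ _ := rfl

theorem eq_zero_of_toSquareBlockProp_eq_zero [Nontrivial R] {𝒜 : Subalgebra R (Matrix ι ι R)}
    [IsSimpleRing 𝒜] {p : ι → Prop} [DecidablePred p] (h𝒜 : 𝒜 ≤ blockTriangularSubalgebra R R p)
    (hp : ∃ i, p i) {M : Matrix ι ι R} (hM : M ∈ 𝒜) (hMp : M.toSquareBlockProp p = 0) :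
    M = 0 := by
  have : Nonempty {i // p i} := nonempty_subtype.2 hp
  have hinj := ((blockTriangularToSquareBlock p).comp (Subalgebra.inclusion h𝒜).toRingHom).injective
  have : (⟨M, hM⟩ : 𝒜) = 0 := hinj (by rw [map_zero]; exact hMp)
  simpa using congrArg Subtype.val this

end BlockTriangular

variable {F : Type*} [Field F]

theorem isSimpleRing_top [Nonempty ι] : IsSimpleRing (⊤ : Subalgebra F (Matrix ι ι F)) :=
  .of_ringEquiv Subalgebra.topEquiv.symm.toRingEquiv inferInstance

theorem single_mem_adjoin_diagonal {d : ι → F} (hd : Function.Injective d) (i : ι) :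
    single i i (1 : F) ∈ Algebra.adjoin F {diagonal d} := by
  rw [Algebra.adjoin_singleton_eq_range_aeval]
  refine ⟨Lagrange.basis Finset.univ d i, ?_⟩
  have hbasis : (fun j => (Lagrange.basis Finset.univ d i).eval (d j)) = Pi.single i 1 := by
    ext j
    rcases eq_or_ne j i with rfl | hji
    · simp [Lagrange.eval_basis_self hd.injOn (Finset.mem_univ j)]
    · simp [Lagrange.eval_basis_of_ne hji.symm (Finset.mem_univ j), hji]
  simp only [AlgHom.toRingHom_eq_coe, RingHom.coe_coe, aeval_diagonal, hbasis, diagonal_single]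

section Subalgebra

variable {κ : Type*} {A : κ → Matrix ι ι F} {𝒜 : Subalgebra F (Matrix ι ι F)}

theorem single_mem_of_apply_ne_zero (hdiag : ∀ i, single i i (1 : F) ∈ 𝒜)
    {M : Matrix ι ι F} (hM : M ∈ 𝒜) {i j : ι} (hij : M i j ≠ 0) : single i j (1 : F) ∈ 𝒜 := by
  have h : (M i j)⁻¹ • (single i i 1 * M * single j j 1) = single i j (1 : F) := by
    rw [single_mul_mul_single, smul_single, smul_eq_mul, one_mul, mul_one, inv_mul_cancel₀ hij]
  exact h ▸ 𝒜.smul_mem (𝒜.mul_mem (𝒜.mul_mem (hdiag i) hM) (hdiag j)) _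

theorem eq_top_of_reflTransGen_burnsideGraph (hdiag : ∀ i, single i i (1 : F) ∈ 𝒜)
    (hA : ∀ m, A m ∈ 𝒜) (hconn : ∀ i j, Relation.ReflTransGen (burnsideGraph A) i j) :
    𝒜 = ⊤ := by
  refine eq_top_of_forall_single_mem fun i j => ?_
  induction hconn i j with
  | refl => exact hdiag i
  | tail _ hbc ih =>
    obtain ⟨-, m, hm⟩ := hbc
    simpa using 𝒜.mul_mem ih (single_mem_of_apply_ne_zero hdiag (hA m) hm)

theorem reflTransGen_burnsideGraph_of_isSimpleRing [IsSimpleRing 𝒜]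
    (hdiag : ∀ i, single i i (1 : F) ∈ 𝒜) {d : ι → F}
    (h𝒜 : 𝒜 ≤ Algebra.adjoin F (Set.range A ∪ {diagonal d})) (i j : ι) :
    Relation.ReflTransGen (burnsideGraph A) i j := by
  classical
  by_contra hij
  set p := Relation.ReflTransGen (burnsideGraph A) i
  have hle : 𝒜 ≤ blockTriangularSubalgebra F F p := by
    refine h𝒜.trans (Algebra.adjoin_le ?_)
    rintro _ (⟨m, rfl⟩ | rfl)
    · exact blockTriangular_of_burnsideGraph_closed (fun _ _ => .tail) m
    · exact blockTriangular_diagonal d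
  have hblock : (single j j (1 : F)).toSquareBlockProp p = 0 := by
    ext a b
    exact single_apply_of_ne _ _ _ _ _ fun h => hij (h.1 ▸ a.2)
  have := eq_zero_of_toSquareBlockProp_eq_zero hle ⟨i, .refl⟩ (hdiag j) hblock
  simpa using congrFun₂ this j j

end Subalgebra

end Matrix

open Matrix in
theorem laffey_generation_theorem_general
    (F : Type*) [Field F] (n k : ℕ) (hn : 1 < n)
    (A : Fin k → Matrix (Fin n) (Fin n) F)
    (d : Fin n → F) (hd : Function.Injective d) :
    let B : Matrix (Fin n) (Fin n) F := Matrix.diagonal d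
    let 𝒜 := Algebra.adjoin F (Set.range A ∪ {B})
    (IsSimpleRing ↥𝒜 ↔ 𝒜 = ⊤) ∧
    (𝒜 = ⊤ ↔
      ∀ i j : Fin n,
        Relation.ReflTransGen (fun i j : Fin n => i ≠ j ∧ ∃ m, A m i j ≠ 0) i j) := by
  intro B 𝒜
  have : NeZero n := ⟨by omega⟩
  have hdiag (i : Fin n) : single i i (1 : F) ∈ 𝒜 :=
    Algebra.adjoin_mono Set.subset_union_right (single_mem_adjoin_diagonal hd i)
  have hA (m : Fin k) : A m ∈ 𝒜 := Algebra.subset_adjoin (Or.inl ⟨m, rfl⟩)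
  have top_of_conn := eq_top_of_reflTransGen_burnsideGraph hdiag hA
  have simple_of_top (h : 𝒜 = ⊤) : IsSimpleRing 𝒜 := h ▸ isSimpleRing_top
  have conn_of_simple : IsSimpleRing 𝒜 → ∀ i j, Relation.ReflTransGen (burnsideGraph A) i j :=
    fun _ => reflTransGen_burnsideGraph_of_isSimpleRing hdiag le_rfl
  exact ⟨⟨fun h => top_of_conn (conn_of_simple h), simple_of_top⟩,
    fun h => conn_of_simple (simple_of_top h), top_of_conn⟩

/-- **Laffey's Generation Theorem.** For a tuple `A` of `n × n` matrices over a
field `F` together with a diagonal matrix `B` with distinct diagonal entries,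
the algebra `𝒜` generated by the `A m` and `B` satisfies: `𝒜` is simple iff
`𝒜` is the full matrix algebra iff the Burnside graph of `A` is strongly
connected. -/
theorem laffey_generation_theorem
    (F : Type*) [Field F] (n k : ℕ) (hn : 1 < n) (hk : 1 ≤ k)
    (A : Fin k → Matrix (Fin n) (Fin n) F)
    (d : Fin n → F) (hd : Function.Injective d) :
    let B : Matrix (Fin n) (Fin n) F := Matrix.diagonal d
    let 𝒜 := Algebra.adjoin F (Set.range A ∪ {B})
    (IsSimpleRing ↥𝒜 ↔ 𝒜 = ⊤) ∧
    (𝒜 = ⊤ ↔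
      ∀ i j : Fin n,
        Relation.ReflTransGen (fun i j : Fin n => i ≠ j ∧ ∃ m, A m i j ≠ 0) i j) :=
  laffey_generation_theorem_general F n k hn A d hd
end

section
/- Let F be a field, n, k ≥ 1, and A : Fin k → Matrix (Fin n) (Fin n) F. Then the underlying F-submodule of the unital algebra generated by the A m equals the linear span of the identity matrix together with all products of at most n² of the matrices: Subalgebra.toSubmodule (Algebra.adjoin F (Set.range A)) = Submodule.span F ({1} ∪ {M : ∃ L : List (Fin k), L ≠ [] ∧ L.length ≤ n^2 ∧ M = (L.map A).prod}). -/
/-!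
Let `W d` be the span of the products of at most `d` generators. These subspaces increase
with `d`, start at `span {1}`, exhaust the generated algebra, and since `W (d + 1)` is spanned
by `1` and the `A i * W d`, the chain is constant from the first `e` with `W e = W (e + 1)` on.
A strictly increasing chain of subspaces of the `n²`-dimensional matrix space that starts in
dimension one has at most `n²` terms, so the chain is constant from `n² - 1` on.
-/

open Module Submodule

theorem Submodule.exists_eq_succ_of_finrank_lt {K V : Type*} [DivisionRing K] [AddCommGroup V]
    [Module K V] [FiniteDimensional K V] {S : ℕ → Submodule K V} (hS : Monotone S) {d : ℕ}
    (hd : finrank K V < d + finrank K (S 0)) : ∃ e < d, S e = S (e + 1) := by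
  by_contra! hstrict
  have hgrowth : ∀ e ≤ d, e + finrank K (S 0) ≤ finrank K (S e) := by
    intro e he
    induction e with
    | zero => simp
    | succ e ih =>
      have hlt : S e < S (e + 1) := (hS e.le_succ).lt_of_ne (hstrict e he)
      have := finrank_lt_finrank_of_lt hlt
      have := ih (by omega)
      omega
  exact (hgrowth d le_rfl).not_gt (hd.trans_le' (finrank_le _))

theorem Submonoid.mem_closure_range_iff_exists_list {ι M : Type*} [Monoid M] {a : ι → M}
    {x : M} : x ∈ closure (Set.range a) ↔ ∃ L : List ι, (L.map a).prod = x := by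
  rw [← FreeMonoid.mrange_lift, MonoidHom.mem_mrange]
  exact ⟨fun ⟨w, hw⟩ => ⟨w.toList, by rw [← hw, FreeMonoid.lift_apply]⟩,
    fun ⟨L, hL⟩ => ⟨FreeMonoid.ofList L, by rw [FreeMonoid.lift_ofList, hL]⟩⟩

section WordSpan

variable (F : Type*) {R ι : Type*} [Field F] [Ring R] [Algebra F R] (a : ι → R)

def wordSpan (d : ℕ) : Submodule F R :=
  span F {x | ∃ L : List ι, L.length ≤ d ∧ (L.map a).prod = x}

variable {F a}

theorem prod_mem_wordSpan {L : List ι} {d : ℕ} (h : L.length ≤ d) :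
    (L.map a).prod ∈ wordSpan F a d :=
  subset_span ⟨L, h, rfl⟩

theorem one_mem_wordSpan (d : ℕ) : (1 : R) ∈ wordSpan F a d :=
  prod_mem_wordSpan (L := []) (Nat.zero_le d)

theorem wordSpan_mono : Monotone (wordSpan F a) :=
  fun _ _ hde => span_mono fun _ ⟨L, hL, hx⟩ => ⟨L, hL.trans hde, hx⟩

theorem mul_mem_wordSpan_succ (i : ι) {d : ℕ} {x : R} (hx : x ∈ wordSpan F a d) :
    a i * x ∈ wordSpan F a (d + 1) := by
  induction hx using span_induction with
  | mem y hy =>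
    obtain ⟨L, hL, rfl⟩ := hy
    exact prod_mem_wordSpan (L := i :: L) (Nat.succ_le_succ hL)
  | zero => simp
  | add y z _ _ hy hz => simpa [mul_add] using add_mem hy hz
  | smul c y _ hy => simpa [mul_smul_comm] using smul_mem _ c hy

theorem wordSpan_succ_le {d : ℕ} {T : Submodule F R} (h1 : (1 : R) ∈ T)
    (hmul : ∀ i, ∀ x ∈ wordSpan F a d, a i * x ∈ T) : wordSpan F a (d + 1) ≤ T := by
  rw [wordSpan, span_le]
  rintro _ ⟨_ | ⟨i, L⟩, hL, rfl⟩
  · simpa using h1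
  · simpa using hmul i _ (prod_mem_wordSpan (Nat.le_of_succ_le_succ hL))

theorem wordSpan_le_of_eq_succ {e : ℕ} (he : wordSpan F a e = wordSpan F a (e + 1)) (d : ℕ) :
    wordSpan F a d ≤ wordSpan F a e := by
  induction d with
  | zero => exact wordSpan_mono (Nat.zero_le e)
  | succ d ih =>
    refine wordSpan_succ_le (one_mem_wordSpan e) fun i x hx => ?_
    rw [he]
    exact mul_mem_wordSpan_succ i (ih hx)

theorem toSubmodule_adjoin_range_eq_iSup_wordSpan :
    Subalgebra.toSubmodule (Algebra.adjoin F (Set.range a)) = ⨆ d, wordSpan F a d := by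
  rw [Algebra.adjoin_eq_span]
  refine le_antisymm (span_le.mpr fun x hx => ?_) (iSup_le fun d => span_mono ?_)
  · obtain ⟨L, rfl⟩ := Submonoid.mem_closure_range_iff_exists_list.mp hx
    exact mem_iSup_of_mem L.length (prod_mem_wordSpan le_rfl)
  · exact fun x ⟨L, _, hL⟩ => Submonoid.mem_closure_range_iff_exists_list.mpr ⟨L, hL⟩

theorem toSubmodule_adjoin_range_eq_wordSpan [Nontrivial R] [FiniteDimensional F R] {d : ℕ}
    (hd : finrank F R ≤ d + 1) :
    Subalgebra.toSubmodule (Algebra.adjoin F (Set.range a)) = wordSpan F a d := by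
  have hpos : 0 < finrank F (wordSpan F a 0) :=
    finrank_pos_iff_exists_ne_zero.mpr ⟨⟨1, one_mem_wordSpan 0⟩, by simp⟩
  obtain ⟨e, he, hstable⟩ :=
    exists_eq_succ_of_finrank_lt (wordSpan_mono (F := F) (a := a)) (d := d + 1) (by omega)
  rw [toSubmodule_adjoin_range_eq_iSup_wordSpan]
  exact le_antisymm (iSup_le fun d' => (wordSpan_le_of_eq_succ hstable d').trans
    (wordSpan_mono (Nat.le_of_lt_succ he))) (le_iSup _ d)

end WordSpan

theorem adjoin_eq_span_words_of_length_le_sq_general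
    (F : Type*) [Field F] (n k : ℕ) (hn : 1 ≤ n)
    (A : Fin k → Matrix (Fin n) (Fin n) F) :
    Subalgebra.toSubmodule (Algebra.adjoin F (Set.range A)) =
      Submodule.span F
        ({1} ∪ {M : Matrix (Fin n) (Fin n) F |
          ∃ L : List (Fin k), L ≠ [] ∧ L.length ≤ n ^ 2 ∧ M = (L.map A).prod}) := by
  have : Nonempty (Fin n) := Fin.pos_iff_nonempty.mp hn
  have hwords : {1} ∪ {M : Matrix (Fin n) (Fin n) F |
      ∃ L : List (Fin k), L ≠ [] ∧ L.length ≤ n ^ 2 ∧ M = (L.map A).prod} =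
      {M | ∃ L : List (Fin k), L.length ≤ n ^ 2 ∧ (L.map A).prod = M} := by
    ext M
    constructor
    · rintro (rfl | ⟨L, -, hL, rfl⟩)
      exacts [⟨[], Nat.zero_le _, rfl⟩, ⟨L, hL, rfl⟩]
    · rintro ⟨L, hL, rfl⟩
      rcases eq_or_ne L [] with rfl | hne
      exacts [Or.inl rfl, Or.inr ⟨L, hne, hL, rfl⟩]
  rw [hwords, ← wordSpan]
  exact toSubmodule_adjoin_range_eq_wordSpan (by simp [finrank_matrix, sq])

/-- The unital algebra generated by a tuple of `n × n` matrices is spanned, as a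
submodule, by the identity matrix together with all products of at most `n²` of
the matrices. -/
theorem adjoin_eq_span_words_of_length_le_sq
    (F : Type*) [Field F] (n k : ℕ) (hn : 1 ≤ n) (hk : 1 ≤ k)
    (A : Fin k → Matrix (Fin n) (Fin n) F) :
    Subalgebra.toSubmodule (Algebra.adjoin F (Set.range A)) =
      Submodule.span F
        ({1} ∪ {M : Matrix (Fin n) (Fin n) F |
          ∃ L : List (Fin k), L ≠ [] ∧ L.length ≤ n ^ 2 ∧ M = (L.map A).prod}) :=
  adjoin_eq_span_words_of_length_le_sq_general F n k hn A
end

section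
/- Let n ≥ 1 and let A, B : Matrix (Fin (2*n)) (Fin (2*n)) ℝ be skew-symmetric (Aᵀ = −A and Bᵀ = −B) with B * B = −1. Set H := A * A and K := A * B + B * A. Then for all x, y : ℝ with x ≠ 0, every eigenvalue of x • H + y • K has even multiplicity; precisely, there exists a monic polynomial g ∈ Polynomial ℝ such that (x • H + y • K).charpoly = g ^ 2. -/
/-!
Put `S := x • A + y • B`, which is skew-symmetric; `B * B = -1` gives
`x • H + y • K = x⁻¹ • (S² + y²)`. Since `t` commutes with `S`,
`det (t² - S²) = det (t - S) * det (t + S)`, and `det (t + S) = det (t - S)` by transposing,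
so `χ_{S²}(t²) = χ_S(t)²`. In even dimension `χ_{-S} = χ_S` forces `χ_S` to be even,
`χ_S(t) = q(t²)`, hence `χ_{S²} = q²`. Shifting and rescaling the variable preserve squares,
and a monic square is the square of a monic polynomial.
-/

open Matrix Polynomial

namespace Polynomial

theorem expand_contract_of_coeff_eq_zero {R : Type*} [CommSemiring R] {p : ℕ} (hp : p ≠ 0)
    {f : R[X]} (hf : ∀ n, ¬ p ∣ n → f.coeff n = 0) : expand R p (contract p f) = f := by
  ext n
  rw [coeff_expand hp.bot_lt, coeff_contract hp]
  split_ifs with h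
  · rw [Nat.div_mul_cancel h]
  · exact (hf n h).symm

theorem Monic.exists_monic_sq_of_eq_sq {R : Type*} [CommSemiring R] [NoZeroDivisors R]
    {p q : R[X]} (hp : p.Monic) (hpq : p = q ^ 2) : ∃ g : R[X], g.Monic ∧ p = g ^ 2 := by
  have hlc : q.leadingCoeff ^ 2 = 1 := by rw [← leadingCoeff_pow, ← hpq, hp.leadingCoeff]
  refine ⟨C q.leadingCoeff * q, ?_, ?_⟩
  · rw [Monic, leadingCoeff_mul, leadingCoeff_C, ← sq, hlc]
  · rw [hpq, mul_pow, ← C_pow, hlc, C_1, one_mul]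

end Polynomial

namespace Matrix

variable {n : Type*} [Fintype n] [DecidableEq n]

theorem charpoly_smul {R : Type*} [CommRing R] [IsDomain R] [Infinite R]
    (M : Matrix n n R) (c : R) :
    (c • M).charpoly = M.charpoly.scaleRoots c := by
  rcases eq_or_ne c 0 with rfl | hc
  · simp [(charpoly_monic M).leadingCoeff]
  apply eq_of_infinite_eval_eq
  refine (Set.infinite_range_of_injective (mul_right_injective₀ hc)).mono ?_
  rintro _ ⟨r, rfl⟩
  rw [Set.mem_ofPred_eq, scaleRoots_eval_mul, eval_charpoly, eval_charpoly,
    charpoly_natDegree_eq_dim, ← det_smul, smul_sub]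
  congr 2
  ext i j
  simp [diagonal_apply]

theorem expand_charpoly_mul_self {R : Type*} [CommRing R] (M : Matrix n n R) :
    expand R 2 (M * M).charpoly = M.charpoly * (-M).charpoly := by
  rw [charpoly, charpoly, charpoly, ← det_mul, ← AlgHom.coe_toRingHom, RingHom.map_det]
  congr 1
  have hcomm : Commute (scalar n (X : R[X])) (M.map C) := scalar_commute _ (Commute.all _) _
  have hneg : (-M).map C = -M.map C := by ext; simp
  simp only [charmatrix, RingHom.mapMatrix_apply]
  rw [hneg, sub_neg_eq_add, ← hcomm.mul_self_sub_mul_self_eq', ← Matrix.map_mul]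
  ext i j : 1
  rcases eq_or_ne i j with rfl | h
  · simp [sq, -Matrix.map_mul]
  · simp [h, -Matrix.map_mul]

section Skew

variable {R : Type*} [CommRing R] [IsDomain R] [CharZero R] {M : Matrix n n R}

theorem coeff_charpoly_eq_zero_of_transpose_eq_neg (hM : Mᵀ = -M) (hn : Even (Fintype.card n))
    {i : ℕ} (hi : Odd i) : M.charpoly.coeff i = 0 := by
  have h := congrArg (coeff · i)
    (show M.charpoly.scaleRoots (-1) = M.charpoly by
      rw [← charpoly_smul, neg_one_smul, ← hM, charpoly_transpose])
  simp only [coeff_scaleRoots, charpoly_natDegree_eq_dim] at h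
  rcases le_or_gt i (Fintype.card n) with hle | hlt
  · rw [(Nat.Even.sub_odd hle hn hi).neg_one_pow, mul_neg_one] at h
    exact self_eq_neg.mp h.symm
  · exact coeff_eq_zero_of_natDegree_lt (by rwa [charpoly_natDegree_eq_dim])

theorem exists_charpoly_mul_self_eq_sq_of_transpose_eq_neg (hM : Mᵀ = -M)
    (hn : Even (Fintype.card n)) : ∃ q : R[X], (M * M).charpoly = q ^ 2 := by
  refine ⟨contract 2 M.charpoly, expand_injective two_pos ?_⟩
  have heven : expand R 2 (contract 2 M.charpoly) = M.charpoly :=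
    expand_contract_of_coeff_eq_zero two_ne_zero fun i hi ↦
      coeff_charpoly_eq_zero_of_transpose_eq_neg hM hn (Nat.odd_iff.mpr (Nat.two_dvd_ne_zero.mp hi))
  rw [expand_charpoly_mul_self, map_pow, heven, ← hM, charpoly_transpose, sq]

end Skew

end Matrix

theorem skew_square_pencil_charpoly_is_square_general
    (n : ℕ)
    (A B : Matrix (Fin (2 * n)) (Fin (2 * n)) ℝ)
    (hA : Aᵀ = -A) (hB : Bᵀ = -B) (hB2 : B * B = -1) :
    ∀ x y : ℝ, x ≠ 0 →
      ∃ g : Polynomial ℝ, g.Monic ∧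
        (x • (A * A) + y • (A * B + B * A)).charpoly = g ^ 2 := by
  intro x y hx
  set S := x • A + y • B
  have hS : Sᵀ = -S := by simp [S, hA, hB, add_comm]
  have hpencil :
      x • (A * A) + y • (A * B + B * A) = x⁻¹ • (S * S - scalar _ (-y ^ 2)) := by
    rw [scalar_apply, ← smul_one_eq_diagonal]
    simp only [S, add_mul, mul_add, smul_mul_assoc, mul_smul_comm, hB2]
    match_scalars <;> field_simp
    ring
  obtain ⟨q, hq⟩ := exists_charpoly_mul_self_eq_sq_of_transpose_eq_neg hS (by simp)
  refine (charpoly_monic _).exists_monic_sq_of_eq_sq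
    (q := (q.comp (X + C (-y ^ 2))).scaleRoots x⁻¹) ?_
  rw [hpencil, charpoly_smul, charpoly_sub_scalar, hq, pow_comp, pow_scaleRoots_of_isReduced]

/-- If `A` and `B` are skew-symmetric real `2n × 2n` matrices with `B² = -1`,
then for `H := A²` and `K := AB + BA`, every real linear combination
`x • H + y • K` with `x ≠ 0` has characteristic polynomial a perfect square of a
monic polynomial; in particular all its eigenvalues have even multiplicity. -/
theorem skew_square_pencil_charpoly_is_square
    (n : ℕ) (hn : 1 ≤ n)
    (A B : Matrix (Fin (2 * n)) (Fin (2 * n)) ℝ)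
    (hA : Aᵀ = -A) (hB : Bᵀ = -B) (hB2 : B * B = -1) :
    ∀ x y : ℝ, x ≠ 0 →
      ∃ g : Polynomial ℝ, g.Monic ∧
        (x • (A * A) + y • (A * B + B * A)).charpoly = g ^ 2 :=
  skew_square_pencil_charpoly_is_square_general n A B hA hB hB2
end

section
/- With A и B the matrices of Laffey-type family (see context), the matrix K := A * B + B * A is the block-diagonal matrix with i-th diagonal 2×2 block equal to −2(i+1)·I₂; that is, K (i,a) (j,b) = −2*(i+1) if (i,a) = (j,b) and 0 otherwise. -/
open Matrix

/-- The 2×2 matrix `α`. -/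
noncomputable def alphaM : Matrix (Fin 2) (Fin 2) ℝ := !![1, 0; 0, -1]

/-- The 2×2 matrix `β`. -/
noncomputable def betaM (b : ℝ) : Matrix (Fin 2) (Fin 2) ℝ := !![0, b; b, 0]

/-- The 2×2 matrix `U`. -/
noncomputable def uM : Matrix (Fin 2) (Fin 2) ℝ := !![0, -1; 1, 0]

/-- The strictly-upper 2-blocks of the Laffey-type family matrix `A`:
`blk A 0 3 = α + β`, `blk A 0 j = α` for the other `j > 0`,
`blk A 1 2 = blk A 1 3 = α`, and all other strictly-upper 2-blocks vanish. -/
noncomputable def upBlk (b : ℝ) (i j : ℕ) : Matrix (Fin 2) (Fin 2) ℝ :=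
  if i = 0 then (if j = 3 then alphaM + betaM b else alphaM)
  else if i = 1 ∧ (j = 2 ∨ j = 3) then alphaM
  else 0

/-- The Laffey-type family matrix `A`: skew-symmetric, with diagonal 2-blocks
`(i+1) • U` and strictly-upper 2-blocks given by `upBlk`. -/
noncomputable def laffeyA (n : ℕ) (b : ℝ) : Matrix (Fin n × Fin 2) (Fin n × Fin 2) ℝ :=
  Matrix.of fun p q =>
    if p.1 = q.1 then (((p.1 : ℕ) + 1) • uM) p.2 q.2
    else if (p.1 : ℕ) < (q.1 : ℕ) then upBlk b (p.1 : ℕ) (q.1 : ℕ) p.2 q.2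
    else (-(upBlk b (q.1 : ℕ) (p.1 : ℕ))ᵀ) p.2 q.2

/-- The matrix `B`: block diagonal with every diagonal 2-block equal to `U`. -/
noncomputable def laffeyB (n : ℕ) : Matrix (Fin n × Fin 2) (Fin n × Fin 2) ℝ :=
  Matrix.of fun p q => if p.1 = q.1 then uM p.2 q.2 else 0

/-!
Since `B = 1 ⊗ₖ U`, the `(i, j)` block of `AB + BA` is the anticommutator `Aᵢⱼ U + U Aᵢⱼ`.
On the diagonal `Aᵢᵢ = (i + 1) U` and `U² = -1` give `-2(i + 1)`. Off the diagonal every block is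
built from `α`, `β` and negated transposes; `α` and `β` anticommute with `U`, and since `U` is
skew-symmetric, anticommuting with it is preserved by transposition.
-/

open scoped Kronecker

section BlockDiagonal

variable {ι κ R : Type*} [Fintype ι] [DecidableEq ι] [Fintype κ] [Semiring R]

lemma Matrix.mul_one_kronecker_apply (M : Matrix (ι × κ) (ι × κ) R) (V : Matrix κ κ R)
    (i j : ι) (a c : κ) :
    (M * ((1 : Matrix ι ι R) ⊗ₖ V)) (i, a) (j, c) =
      (M.submatrix (Prod.mk i) (Prod.mk j) * V) a c := by
  simp [mul_apply, Fintype.sum_prod_type, one_apply]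

lemma Matrix.one_kronecker_mul_apply (M : Matrix (ι × κ) (ι × κ) R) (V : Matrix κ κ R)
    (i j : ι) (a c : κ) :
    (((1 : Matrix ι ι R) ⊗ₖ V) * M) (i, a) (j, c) =
      (V * M.submatrix (Prod.mk i) (Prod.mk j)) a c := by
  simp [mul_apply, Fintype.sum_prod_type, one_apply]

end BlockDiagonal

lemma Matrix.transpose_anticomm_of_transpose_eq_neg {κ R : Type*} [Fintype κ] [CommRing R]
    {V N : Matrix κ κ R} (hV : Vᵀ = -V) (h : N * V + V * N = 0) :
    Nᵀ * V + V * Nᵀ = 0 := by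
  have := congrArg Matrix.transpose h
  rw [transpose_add, transpose_mul, transpose_mul, hV, transpose_zero] at this
  rwa [neg_mul, mul_neg, ← neg_add, neg_eq_zero, add_comm] at this

lemma laffeyB_eq_one_kronecker (n : ℕ) : laffeyB n = 1 ⊗ₖ uM := by
  ext ⟨i, a⟩ ⟨j, c⟩
  simp [laffeyB, one_apply]

lemma uM_transpose : uMᵀ = -uM := by
  ext a c; fin_cases a <;> fin_cases c <;> simp [uM]

lemma uM_mul_uM : uM * uM = -1 := by
  ext a c; fin_cases a <;> fin_cases c <;> simp [uM]

lemma alphaM_anticomm_uM : alphaM * uM + uM * alphaM = 0 := by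
  ext a c; fin_cases a <;> fin_cases c <;> simp [alphaM, uM]

lemma betaM_anticomm_uM (b : ℝ) : betaM b * uM + uM * betaM b = 0 := by
  ext a c; fin_cases a <;> fin_cases c <;> simp [betaM, uM]

lemma upBlk_anticomm_uM (b : ℝ) (i j : ℕ) : upBlk b i j * uM + uM * upBlk b i j = 0 := by
  unfold upBlk
  split_ifs
  · rw [add_mul, mul_add, add_add_add_comm, alphaM_anticomm_uM, betaM_anticomm_uM, add_zero]
  all_goals simp [alphaM_anticomm_uM]

lemma nsmul_uM_anticomm_uM (m : ℕ) : (m • uM) * uM + uM * (m • uM) = (-2 * m : ℝ) • 1 := by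
  rw [smul_mul_assoc, mul_smul_comm, uM_mul_uM, ← Nat.cast_smul_eq_nsmul ℝ]
  module

lemma neg_transpose_upBlk_anticomm_uM (b : ℝ) (i j : ℕ) :
    -(upBlk b i j)ᵀ * uM + uM * -(upBlk b i j)ᵀ = 0 := by
  rw [neg_mul, mul_neg, ← neg_add, neg_eq_zero,
    transpose_anticomm_of_transpose_eq_neg uM_transpose (upBlk_anticomm_uM b i j)]

lemma laffeyA_submatrix (n : ℕ) (b : ℝ) (i j : Fin n) :
    (laffeyA n b).submatrix (Prod.mk i) (Prod.mk j) =
      if i = j then ((i : ℕ) + 1) • uM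
      else if (i : ℕ) < j then upBlk b i j else -(upBlk b j i)ᵀ := by
  ext a c
  simp only [laffeyA, submatrix_apply, of_apply]
  split_ifs <;> rfl

theorem laffey_family_K_eq_block_diagonal_general
    (n : ℕ) (b : ℝ) :
    ∀ p q : Fin n × Fin 2,
      (laffeyA n b * laffeyB n + laffeyB n * laffeyA n b) p q =
        if p = q then -2 * (((p.1 : ℕ) : ℝ) + 1) else 0 := by
  rintro ⟨i, a⟩ ⟨j, c⟩
  rw [laffeyB_eq_one_kronecker, Matrix.add_apply, mul_one_kronecker_apply,
    one_kronecker_mul_apply, ← Matrix.add_apply, laffeyA_submatrix]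
  by_cases hij : i = j
  · subst hij
    rw [if_pos rfl, nsmul_uM_anticomm_uM]
    simp [one_apply]
  · have hp : (i, a) ≠ (j, c) := fun h => hij (congrArg Prod.fst h)
    rw [if_neg hij, if_neg hp]
    split_ifs
    · rw [upBlk_anticomm_uM, Matrix.zero_apply]
    · rw [neg_transpose_upBlk_anticomm_uM, Matrix.zero_apply]

/-- For the Laffey-type family, `K := AB + BA` is the block diagonal matrix whose
`i`-th diagonal 2×2 block is `-2(i+1) • I₂`. -/
theorem laffey_family_K_eq_block_diagonal
    (n : ℕ) (hn : 4 ≤ n) (b : ℝ) (hb : b ≠ 0) :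
    ∀ p q : Fin n × Fin 2,
      (laffeyA n b * laffeyB n + laffeyB n * laffeyA n b) p q =
        if p = q then -2 * (((p.1 : ℕ) : ℝ) + 1) else 0 :=
  laffey_family_K_eq_block_diagonal_general n b
end

section
/- With A and B the matrices of the Laffey-type family (see context), set H := A * A and K := A * B + B * A (both real symmetric 2n×2n matrices). Then for all x, y : ℝ, every eigenvalue of x • H + y • K has even multiplicity; precisely, there exists a monic polynomial g ∈ Polynomial ℝ such that (x • H + y • K).charpoly = g ^ 2. -/
open Matrix

/-!
With `B * B = -1` and `t = y / x`, the pencil is `x • (A + t • B)² + (y² / x) • 1`, and `A + t • B`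
is skew-symmetric. For a skew-symmetric `S` of even size, `χ_{S²}(X²) = χ_S(X) χ_{-S}(X) = χ_S(X)²`
and `χ_S` is even, so `χ_S = q(X²)` and `χ_{S²} = q²`. When `x = 0`, the blocks `α` and `β`
anticommute with `U`, so `A * B + B * A = (-2 • diag(i + 1)) ⊗ I₂`, whose characteristic polynomial
is a square.
-/

open Polynomial
open scoped Kronecker

namespace Polynomial

variable {R : Type*} [CommRing R]

theorem Monic.exists_monic_sq_eq_of_isSquare [NoZeroDivisors R] {p : R[X]} (hp : p.Monic)
    (h : IsSquare p) : ∃ g : R[X], g.Monic ∧ p = g ^ 2 := by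
  obtain ⟨r, rfl⟩ := h
  have hlc : r.leadingCoeff * r.leadingCoeff = 1 := by rw [← leadingCoeff_mul]; exact hp
  rcases mul_self_eq_one_iff.mp hlc with hr | hr
  · exact ⟨r, hr, (sq r).symm⟩
  · exact ⟨-r, by rw [Monic, leadingCoeff_neg, hr, neg_neg], by ring⟩

theorem expand_two_contract_of_comp_neg_X_eq [NoZeroDivisors R] [NeZero (2 : R)] {p : R[X]}
    (hp : p.comp (-X) = p) : expand R 2 (contract 2 p) = p := by
  ext k
  rw [coeff_expand two_pos]
  split_ifs with hk
  · rw [coeff_contract two_ne_zero, Nat.div_mul_cancel hk]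
  · have hcoeff := congrArg (coeff · k) hp
    rw [show (-X : R[X]) = C (-1) * X by simp, comp_C_mul_X_coeff,
      (Nat.odd_iff.mpr (Nat.two_dvd_ne_zero.mp hk)).neg_one_pow, mul_neg_one] at hcoeff
    have h2 : (2 : R) * p.coeff k = 0 := (two_mul _).trans (neg_eq_iff_add_eq_zero.mp hcoeff)
    exact ((mul_eq_zero.mp h2).resolve_left two_ne_zero).symm

end Polynomial

namespace Matrix

variable {n R : Type*} [Fintype n] [DecidableEq n] [CommRing R]

theorem charpoly_comp_eq_det (M : Matrix n n R) (p : R[X]) :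
    M.charpoly.comp p = (scalar n p - M.map C).det := by
  rw [← eval_charpoly, charpoly_map, eval_map]
  rfl

theorem charpoly_units_smul (a : Rˣ) (M : Matrix n n R) :
    ((a : R) • M).charpoly = C (a : R) ^ Fintype.card n * M.charpoly.comp (C (↑a⁻¹ : R) * X) := by
  rw [charpoly_comp_eq_det, ← det_smul, charpoly, charmatrix]
  congr 1
  refine Matrix.ext fun i j => ?_
  by_cases hij : i = j
  · subst hij
    have hunit : C (a : R) * C (↑a⁻¹ : R) = 1 := by rw [← C_mul, Units.mul_inv, C_1]
    simp only [sub_apply, smul_apply, scalar_apply, diagonal_apply_eq, map_apply,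
      RingHom.mapMatrix_apply, smul_eq_mul, map_mul, diagonal_mul_diagonal]
    linear_combination (-X : R[X]) * hunit
  · simp [hij]

theorem charpoly_mul_self_comp_X_sq (M : Matrix n n R) :
    (M * M).charpoly.comp (X ^ 2) = M.charpoly * (-M).charpoly := by
  have hcomm : scalar n (X : R[X]) * M.map C = M.map C * scalar n X :=
    (scalar_commute _ (fun r => Commute.all _ r) _).eq
  rw [charpoly_comp_eq_det, charpoly, charpoly, charmatrix, charmatrix, ← det_mul]
  congr 1
  simp only [RingHom.mapMatrix_apply, map_neg, map_mul, sq, Matrix.map_mul, sub_neg_eq_add]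
  rw [sub_mul, mul_add, mul_add, hcomm]
  abel

theorem charpoly_comp_neg_X_of_transpose_eq_neg {S : Matrix n n R} (hS : Sᵀ = -S)
    (hn : Even (Fintype.card n)) : S.charpoly.comp (-X) = S.charpoly := by
  have h := charpoly_units_smul (-1) S
  rw [Units.val_neg, Units.val_one, neg_one_smul, ← hS, charpoly_transpose, inv_neg, inv_one,
    Units.val_neg, Units.val_one, map_neg, map_one, neg_one_mul, hn.neg_one_pow, one_mul] at h
  exact h.symm

theorem isSquare_charpoly_mul_self_of_transpose_eq_neg [NoZeroDivisors R] [NeZero (2 : R)]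
    {S : Matrix n n R} (hS : Sᵀ = -S) (hn : Even (Fintype.card n)) :
    IsSquare (S * S).charpoly := by
  have heven :=
    expand_two_contract_of_comp_neg_X_eq (charpoly_comp_neg_X_of_transpose_eq_neg hS hn)
  refine ⟨contract 2 S.charpoly, expand_injective two_pos ?_⟩
  rw [expand_eq_comp_X_pow, charpoly_mul_self_comp_X_sq, ← hS, charpoly_transpose, map_mul, heven]

theorem isSquare_charpoly_smul_mul_self_add_smul_anticomm {K : Type*} [Field K] [NeZero (2 : K)]
    {A B : Matrix n n K} (hA : Aᵀ = -A) (hB : Bᵀ = -B) (hBB : B * B = -1)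
    (hn : Even (Fintype.card n)) {x : K} (hx : x ≠ 0) (y : K) :
    IsSquare (x • (A * A) + y • (A * B + B * A)).charpoly := by
  set S := A + (y / x) • B
  have hS : Sᵀ = -S := by rw [transpose_add, transpose_smul, hA, hB, smul_neg, neg_add]
  have hpencil : x • (A * A) + y • (A * B + B * A)
      = (Units.mk0 x hx : K) • (S * S) - scalar n (-(y ^ 2 / x)) := by
    have hxy : x * (y / x) = y := by field_simp
    have hxyy : x * (y / x * (y / x)) = y ^ 2 / x := by field_simp
    rw [Units.val_mk0, scalar_apply, ← smul_one_eq_diagonal]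
    simp only [S, add_mul, mul_add, Matrix.smul_mul, Matrix.mul_smul, hBB, smul_add, smul_smul,
      smul_neg, hxy, hxyy, neg_smul, sub_neg_eq_add]
    abel
  rw [hpencil, charpoly_sub_scalar, charpoly_units_smul]
  have hSS := isSquare_charpoly_mul_self_of_transpose_eq_neg hS hn
  exact ((hn.isSquare_pow _).mul (hSS.map (compRingHom _))).map (compRingHom _)

theorem kronecker_neg {l m o p R : Type*} [Ring R] (A : Matrix l m R) (B : Matrix o p R) :
    A ⊗ₖ (-B) = -(A ⊗ₖ B) := by
  ext; simp

theorem kronecker_mul_one_kronecker_add {m o : Type*} [Fintype m] [DecidableEq m] [Fintype o]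
    (P : Matrix m m R) (Q U : Matrix o o R) :
    P ⊗ₖ Q * (1 ⊗ₖ U) + 1 ⊗ₖ U * (P ⊗ₖ Q) = P ⊗ₖ (Q * U + U * Q) := by
  rw [← mul_kronecker_mul, ← mul_kronecker_mul, mul_one, one_mul, kronecker_add]

theorem charpoly_kronecker_one {o : Type*} [Fintype o] [DecidableEq o] (M : Matrix n n R) :
    (M ⊗ₖ (1 : Matrix o o R)).charpoly = M.charpoly ^ Fintype.card o := by
  have hchar : charmatrix (M ⊗ₖ (1 : Matrix o o R)) = charmatrix M ⊗ₖ 1 := by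
    ext ⟨i, a⟩ ⟨j, c⟩
    by_cases hij : i = j <;> by_cases hac : a = c <;> simp [hij, hac]
  rw [charpoly, hchar, det_kronecker, det_one, one_pow, mul_one, charpoly]

end Matrix

namespace Laffey

theorem uM_transpose : uMᵀ = -uM := by
  ext a c; fin_cases a <;> fin_cases c <;> simp [uM]

theorem alphaM_transpose : alphaMᵀ = alphaM := by
  ext a c; fin_cases a <;> fin_cases c <;> simp [alphaM]

theorem betaM_transpose (b : ℝ) : (betaM b)ᵀ = betaM b := by
  ext a c; fin_cases a <;> fin_cases c <;> simp [betaM]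

theorem uM_mul_self : uM * uM = -1 := by
  simp [uM, one_fin_two]

theorem alphaM_anticomm_uM : alphaM * uM + uM * alphaM = 0 := by
  ext a c; fin_cases a <;> fin_cases c <;> simp [alphaM, uM]

theorem betaM_anticomm_uM (b : ℝ) : betaM b * uM + uM * betaM b = 0 := by
  ext a c; fin_cases a <;> fin_cases c <;> simp [betaM, uM]

theorem laffeyA_transpose (n : ℕ) (b : ℝ) : (laffeyA n b)ᵀ = -laffeyA n b := by
  ext ⟨i, a⟩ ⟨j, c⟩
  simp only [transpose_apply, Matrix.neg_apply, laffeyA, of_apply]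
  split_ifs with hji <;> try omega
  · subst hji
    have hU : uM a c = -uM c a := congr_fun₂ uM_transpose c a
    simp [hU]
  · exact (neg_neg _).symm
  · rfl

noncomputable def alphaCoeff (i j : ℕ) : ℝ := if i = 0 ∨ i = 1 ∧ (j = 2 ∨ j = 3) then 1 else 0

noncomputable def betaCoeff (i j : ℕ) : ℝ := if i = 0 ∧ j = 3 then 1 else 0

theorem upBlk_eq (b : ℝ) (i j : ℕ) :
    upBlk b i j = alphaCoeff i j • alphaM + betaCoeff i j • betaM b := by
  unfold upBlk alphaCoeff betaCoeff
  split_ifs <;> simp_all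

noncomputable def skewOfUpper (f : ℕ → ℕ → ℝ) (n : ℕ) : Matrix (Fin n) (Fin n) ℝ :=
  of fun i j => if i = j then 0 else if (i : ℕ) < j then f i j else -f j i

theorem laffeyA_eq_kronecker (n : ℕ) (b : ℝ) :
    laffeyA n b = diagonal (fun i : Fin n => (i : ℝ) + 1) ⊗ₖ uM
      + skewOfUpper alphaCoeff n ⊗ₖ alphaM + skewOfUpper betaCoeff n ⊗ₖ betaM b := by
  ext ⟨i, a⟩ ⟨j, c⟩
  by_cases hij : i = j
  · subst hij
    simp [laffeyA, skewOfUpper]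
  · have hα : alphaM c a = alphaM a c := congr_fun₂ alphaM_transpose a c
    have hβ : betaM b c a = betaM b a c := congr_fun₂ (betaM_transpose b) a c
    simp only [laffeyA, skewOfUpper, of_apply, Matrix.add_apply, kronecker_apply,
      diagonal_apply_ne _ hij, upBlk_eq, if_neg hij]
    split_ifs
    · simp
    · simp [hα, hβ]
      ring

theorem laffeyB_eq_kronecker (n : ℕ) : laffeyB n = 1 ⊗ₖ uM := by
  ext ⟨i, a⟩ ⟨j, c⟩
  by_cases hij : i = j <;> simp [laffeyB, one_apply, hij]

theorem laffeyB_transpose (n : ℕ) : (laffeyB n)ᵀ = -laffeyB n := by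
  rw [laffeyB_eq_kronecker, ← kroneckerMap_transpose, transpose_one, uM_transpose, kronecker_neg]

theorem laffeyB_mul_self (n : ℕ) : laffeyB n * laffeyB n = -1 := by
  rw [laffeyB_eq_kronecker, ← mul_kronecker_mul, one_mul, uM_mul_self, kronecker_neg,
    one_kronecker_one]

theorem laffeyA_mul_laffeyB_add (n : ℕ) (b : ℝ) :
    laffeyA n b * laffeyB n + laffeyB n * laffeyA n b
      = ((-2 : ℝ) • diagonal (fun i : Fin n => (i : ℝ) + 1)) ⊗ₖ (1 : Matrix (Fin 2) (Fin 2) ℝ) := by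
  rw [laffeyA_eq_kronecker, laffeyB_eq_kronecker]
  set D := diagonal (fun i : Fin n => (i : ℝ) + 1)
  set P := skewOfUpper alphaCoeff n
  set Q := skewOfUpper betaCoeff n
  set B := (1 : Matrix (Fin n) (Fin n) ℝ) ⊗ₖ uM
  calc _ = (D ⊗ₖ uM * B + B * D ⊗ₖ uM) + (P ⊗ₖ alphaM * B + B * P ⊗ₖ alphaM)
        + (Q ⊗ₖ betaM b * B + B * Q ⊗ₖ betaM b) := by noncomm_ring
    _ = D ⊗ₖ (uM * uM + uM * uM) + P ⊗ₖ (alphaM * uM + uM * alphaM)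
        + Q ⊗ₖ (betaM b * uM + uM * betaM b) := by
      simp only [B, kronecker_mul_one_kronecker_add]
    _ = _ := by
      rw [uM_mul_self, alphaM_anticomm_uM, betaM_anticomm_uM, kronecker_zero, kronecker_zero,
        add_zero, add_zero]
      ext
      simp
      ring

end Laffey

open Laffey in
theorem laffey_family_pencil_charpoly_is_square_general
    (n : ℕ) (b : ℝ) :
    ∀ x y : ℝ,
      ∃ g : Polynomial ℝ, g.Monic ∧
        (x • (laffeyA n b * laffeyA n b) +
          y • (laffeyA n b * laffeyB n + laffeyB n * laffeyA n b)).charpoly = g ^ 2 := by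
  intro x y
  refine (charpoly_monic _).exists_monic_sq_eq_of_isSquare ?_
  rcases eq_or_ne x 0 with rfl | hx
  · rw [zero_smul, zero_add, laffeyA_mul_laffeyB_add, ← smul_kronecker y, charpoly_kronecker_one]
    exact (by simp : Even (Fintype.card (Fin 2))).isSquare_pow _
  · exact isSquare_charpoly_smul_mul_self_add_smul_anticomm (laffeyA_transpose n b)
      (laffeyB_transpose n) (laffeyB_mul_self n) ⟨n, by simp [mul_two]⟩ hx y

/-- For the Laffey-type family, with `H := A²` and `K := AB + BA`, every real
linear combination `x • H + y • K` has characteristic polynomial a perfect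
square of a monic polynomial; in particular all its eigenvalues have even
multiplicity. -/
theorem laffey_family_pencil_charpoly_is_square
    (n : ℕ) (hn : 4 ≤ n) (b : ℝ) (hb : b ≠ 0) :
    ∀ x y : ℝ,
      ∃ g : Polynomial ℝ, g.Monic ∧
        (x • (laffeyA n b * laffeyA n b) +
          y • (laffeyA n b * laffeyB n + laffeyB n * laffeyA n b)).charpoly = g ^ 2 :=
  laffey_family_pencil_charpoly_is_square_general n b
end

section
/- Let F be a field, n, k ≥ 1, and A : Fin k → Matrix (Fin n) (Fin n) F. Let F̄ := AlgebraicClosure F. Then the A m generate the full matrix algebra over F if and only if their images generate the full matrix algebra over F̄: Algebra.adjoin F (Set.range A) = ⊤ ↔ Algebra.adjoin F̄ (Set.range (fun m => (A m).map (algebraMap F F̄))) = ⊤. -/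
/-!
The subalgebra generated by a set `S` is the linear span of the monoid generated by `S`, and
taking monoid closures commutes with the entrywise embedding `F → K`. It therefore suffices that a
set `T` of matrices spans over `F` iff its image spans over `K`. One direction holds because the
image of `Matrix m n F` contains the matrix units; for the other, the `K`-span of the image of `T`
is spanned by the image of an `F`-basis of `span F T`, so its dimension is at most that of
`span F T`.
-/

open Module Submodule

namespace Submodule

variable {F K V W : Type*} [Field F] [Field K] [Algebra F K] [AddCommGroup V] [Module F V]
  [AddCommGroup W] [Module F W] [Module K W] [IsScalarTower F K W]

theorem finrank_span_le_finrank_of_tower (p : Submodule F W) [Module.Finite F p] :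
    finrank K (span K (p : Set W)) ≤ finrank F p := by
  have : Module.Finite F (span F (p : Set W)) := by rwa [span_eq]
  obtain ⟨f, -, hf, -⟩ := exists_fun_fin_finrank_span_eq F (p : Set W)
  have hK : span K (Set.range f) = span K (p : Set W) := by
    rw [← span_span_of_tower F K, hf, span_span_of_tower]
  rw [← hK]
  exact (finrank_range_le_card f).trans_eq (by rw [Fintype.card_fin, span_eq])

theorem span_image_eq_span_map_span (g : V →ₗ[F] W) (s : Set V) :
    span K (g '' s) = span K (map g (span F s) : Set W) := by
  rw [← span_image, span_span_of_tower]

theorem finrank_span_image_le_finrank_span (g : V →ₗ[F] W) (s : Set V)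
    [Module.Finite F (span F s)] : finrank K (span K (g '' s)) ≤ finrank F (span F s) := by
  rw [span_image_eq_span_map_span]
  exact (finrank_span_le_finrank_of_tower _).trans (finrank_map_le _ _)

end Submodule

namespace Matrix

variable {F K m n : Type*} [Field F] [Field K] [Algebra F K] [Fintype m] [Fintype n]

theorem span_range_map_algebraMap :
    span K (Set.range fun M : Matrix m n F => M.map (algebraMap F K)) = ⊤ := by
  classical
  refine eq_top_iff.2 fun M _ => ?_
  rw [matrix_eq_sum_single M]
  refine sum_mem fun i _ => sum_mem fun j _ => ?_
  rw [← mul_one (M i j), ← smul_eq_mul, ← smul_single]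
  exact smul_mem _ _ (subset_span ⟨single i j 1, by simp⟩)

theorem span_image_map_algebraMap_eq_top_iff (T : Set (Matrix m n F)) :
    span K ((fun M : Matrix m n F => M.map (algebraMap F K)) '' T) = ⊤ ↔ span F T = ⊤ := by
  obtain ⟨g, hg⟩ : ∃ g : Matrix m n F →ₗ[F] Matrix m n K,
      ⇑g = fun M => M.map (algebraMap F K) := ⟨(Algebra.linearMap F K).mapMatrix, rfl⟩
  rw [← hg]
  refine ⟨fun h => eq_top_of_finrank_eq (le_antisymm (finrank_le _) ?_), fun h => ?_⟩
  · calc finrank F (Matrix m n F) = finrank K (Matrix m n K) := by simp [finrank_matrix]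
      _ = finrank K (span K (g '' T)) := by rw [h, finrank_top]
      _ ≤ finrank F (span F T) := finrank_span_image_le_finrank_span g T
  · rw [span_image_eq_span_map_span, h, Submodule.map_top, LinearMap.coe_range, hg]
    exact span_range_map_algebraMap

theorem adjoin_image_map_algebraMap_eq_top_iff [DecidableEq m] (S : Set (Matrix m m F)) :
    Algebra.adjoin K ((fun M : Matrix m m F => M.map (algebraMap F K)) '' S) = ⊤ ↔
      Algebra.adjoin F S = ⊤ := by
  obtain ⟨g, hg⟩ : ∃ g : Matrix m m F →ₐ[F] Matrix m m K,
      ⇑g = fun M => M.map (algebraMap F K) := ⟨(Algebra.ofId F K).mapMatrix, rfl⟩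
  have hclosure : (Submonoid.closure (g '' S) : Set (Matrix m m K)) =
      g '' Submonoid.closure S := by
    rw [← MonoidHom.map_mclosure, Submonoid.coe_map]
  rw [← Algebra.toSubmodule_eq_top, ← Algebra.toSubmodule_eq_top, Algebra.adjoin_eq_span,
    Algebra.adjoin_eq_span, ← hg, hclosure, hg]
  exact span_image_map_algebraMap_eq_top_iff _

end Matrix

theorem adjoin_eq_top_iff_adjoin_algebraicClosure_eq_top_general
    (F : Type*) [Field F] (n k : ℕ)
    (A : Fin k → Matrix (Fin n) (Fin n) F) :
    Algebra.adjoin F (Set.range A) = ⊤ ↔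
      Algebra.adjoin (AlgebraicClosure F)
        (Set.range fun m => (A m).map (algebraMap F (AlgebraicClosure F))) = ⊤ := by
  rw [Set.range_comp' (fun M => M.map (algebraMap F (AlgebraicClosure F))) A,
    Matrix.adjoin_image_map_algebraMap_eq_top_iff]

/-- A tuple of `n × n` matrices over a field `F` generates the full matrix
algebra over `F` if and only if their images generate the full matrix algebra
over the algebraic closure of `F`. -/
theorem adjoin_eq_top_iff_adjoin_algebraicClosure_eq_top
    (F : Type*) [Field F] (n k : ℕ) (hn : 1 ≤ n) (hk : 1 ≤ k)
    (A : Fin k → Matrix (Fin n) (Fin n) F) :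
    Algebra.adjoin F (Set.range A) = ⊤ ↔
      Algebra.adjoin (AlgebraicClosure F)
        (Set.range fun m => (A m).map (algebraMap F (AlgebraicClosure F))) = ⊤ :=
  adjoin_eq_top_iff_adjoin_algebraicClosure_eq_top_general F n k A
end
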